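/- arXiv:1610.06263 — 8 statements merged into one kernel-verified Lean document; each statement's English description precedes it below -/
import Mathlib

section
/- Let G be a connected complex Lie group modeled on a finite-dimensional complex normed space which is a Cousin group, let E be a complex Banach space, and let ρ : G → (E →L[ℂ] E) be a holomorphic map into the continuous ℂ-linear endomorphisms of E satisfying ρ(1) = id and ρ(g·h) = ρ(g) ∘ ρ(h) for all g, h ∈ G. Then ρ(g) = id for every g ∈ G, i.e. every representation of a Cousin group in a Banach space is trivial. -/
open Manifold

/-! Continuous linear functionals carry a holomorphic map `ρ` to holomorphic functions, which
are constant on a Cousin group, and by Hahn–Banach they separate points of `E' →L[ℂ] E'`. -/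

theorem MDifferentiable.apply_eq_apply_of_forall_complex_const
    {E : Type*} [NormedAddCommGroup E] [NormedSpace ℂ E]
    {H : Type*} [TopologicalSpace H] {I : ModelWithCorners ℂ E H}
    {M : Type*} [TopologicalSpace M] [ChartedSpace H M]
    (hM : ∀ f : M → ℂ, MDifferentiable I 𝓘(ℂ, ℂ) f → ∀ x y : M, f x = f y)
    {F : Type*} [NormedAddCommGroup F] [NormedSpace ℂ F]
    {f : M → F} (hf : MDifferentiable I 𝓘(ℂ, F) f) (x y : M) : f x = f y :=
  SeparatingDual.eq_iff_forall_dual_eq.2 fun φ =>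
    hM (φ ∘ f) (φ.differentiable.mdifferentiable.comp hf) x y

theorem representation_of_cousin_group_trivial_general
    {E : Type*} [NormedAddCommGroup E] [NormedSpace ℂ E]
    {G : Type*} [TopologicalSpace G] [ChartedSpace E G] [Group G]
    (hcousin : ∀ g : G → ℂ, MDifferentiable 𝓘(ℂ, E) 𝓘(ℂ, ℂ) g → ∀ x y : G, g x = g y)
    {E' : Type*} [NormedAddCommGroup E'] [NormedSpace ℂ E']
    (ρ : G → (E' →L[ℂ] E'))
    (hρ : MDifferentiable 𝓘(ℂ, E) 𝓘(ℂ, E' →L[ℂ] E') ρ)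
    (hone : ρ 1 = ContinuousLinearMap.id ℂ E') :
    ∀ g : G, ρ g = ContinuousLinearMap.id ℂ E' := fun g =>
  hone ▸ hρ.apply_eq_apply_of_forall_complex_const hcousin g 1

/-- **Representations of Cousin groups are trivial.**
Let `G` be a connected complex Lie group (modeled on a finite-dimensional complex normed
space `E`) which is a Cousin group, i.e. every holomorphic function `G → ℂ` is constant.
Then every holomorphic representation `ρ` of `G` on a complex Banach space `E'` (a holomorphic
map into the continuous `ℂ`-linear endomorphisms with `ρ 1 = id` and `ρ (g * h) = ρ g ∘ ρ h`)
is trivial: `ρ g = id` for all `g`. -/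
theorem representation_of_cousin_group_trivial
    {E : Type*} [NormedAddCommGroup E] [NormedSpace ℂ E] [FiniteDimensional ℂ E]
    {G : Type*} [TopologicalSpace G] [ChartedSpace E G] [Group G] [IsTopologicalGroup G]
    [LieGroup 𝓘(ℂ, E) (⊤ : ℕ∞) G] [ConnectedSpace G]
    (hcousin : ∀ g : G → ℂ, MDifferentiable 𝓘(ℂ, E) 𝓘(ℂ, ℂ) g → ∀ x y : G, g x = g y)
    {E' : Type*} [NormedAddCommGroup E'] [NormedSpace ℂ E'] [CompleteSpace E']
    (ρ : G → (E' →L[ℂ] E'))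
    (hρ : MDifferentiable 𝓘(ℂ, E) 𝓘(ℂ, E' →L[ℂ] E') ρ)
    (hone : ρ 1 = ContinuousLinearMap.id ℂ E')
    (hmul : ∀ g h : G, ρ (g * h) = (ρ g).comp (ρ h)) :
    ∀ g : G, ρ g = ContinuousLinearMap.id ℂ E' :=
  representation_of_cousin_group_trivial_general hcousin ρ hρ hone
end

section
/- Every connected complex Lie group G modeled on a finite-dimensional complex normed space which is a Cousin group is commutative: for all a, b ∈ G one has a·b = b·a. -/
open Manifold


section Aux
set_option linter.unusedSectionVars false

variable {E : Type*} [NormedAddCommGroup E] [NormedSpace ℂ E]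
    {G : Type*} [TopologicalSpace G] [ChartedSpace E G] [Group G] [IsTopologicalGroup G]
    [LieGroup 𝓘(ℂ, E) (⊤ : ℕ∞) G]

/-- The manifold derivative of a self-map of `G`, seen as a continuous linear map `E →L[ℂ] E`
(using that every tangent space of `G` is canonically `E`). -/
noncomputable def mder (f : G → G) (x : G) : E →L[ℂ] E := mfderiv 𝓘(ℂ, E) 𝓘(ℂ, E) f x

lemma mder_fun_congr {f g : G → G} (x : G) (h : f = g) :
    mder (E := E) f x = mder g x := by subst h; rfl

lemma mder_pt_congr (f : G → G) {x y : G} (h : x = y) :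
    mder (E := E) f x = mder f y := by subst h; rfl

lemma mder_id (x : G) : mder (E := E) id x = ContinuousLinearMap.id ℂ E := mfderiv_id

lemma mder_const (c x : G) : mder (E := E) (fun _ : G => c) x = 0 := mfderiv_const

lemma mder_comp (g f : G → G) (x : G)
    (hg : MDifferentiableAt 𝓘(ℂ, E) 𝓘(ℂ, E) g (f x))
    (hf : MDifferentiableAt 𝓘(ℂ, E) 𝓘(ℂ, E) f x) :
    mder (E := E) (g ∘ f) x = (mder g (f x)).comp (mder f x) := mfderiv_comp x hg hf

lemma mdiff_mul_pt (p : G × G) :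
    MDifferentiableAt (𝓘(ℂ, E).prod 𝓘(ℂ, E)) 𝓘(ℂ, E) (fun q : G × G => q.1 * q.2) p :=
  ((contMDiff_mul 𝓘(ℂ, E) (⊤ : ℕ∞)).mdifferentiable (by simp)) p

lemma mdiff_inv_pt (x : G) :
    MDifferentiableAt 𝓘(ℂ, E) 𝓘(ℂ, E) (fun h : G => h⁻¹) x :=
  ((contMDiff_inv 𝓘(ℂ, E) (⊤ : ℕ∞)).mdifferentiable (by simp)) x

lemma mdiff_conj (a x y : G) :
    MDifferentiableAt 𝓘(ℂ, E) 𝓘(ℂ, E) (fun u : G => a * u * x) y :=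
  ((((contMDiff_const.mul contMDiff_id).mul contMDiff_const : ContMDiff 𝓘(ℂ, E) 𝓘(ℂ, E) (⊤ : ℕ∞) _)).mdifferentiable (by simp)) y

lemma mdiff_mul_left (a y : G) :
    MDifferentiableAt 𝓘(ℂ, E) 𝓘(ℂ, E) (fun u : G => a * u) y :=
  (((contMDiff_mul_left : ContMDiff 𝓘(ℂ, E) 𝓘(ℂ, E) (⊤ : ℕ∞) _).mdifferentiable (by simp))) y

lemma mdiff_cx' (x y : G) :
    MDifferentiableAt 𝓘(ℂ, E) 𝓘(ℂ, E) (fun h : G => h * x * h⁻¹) y :=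
  ((((contMDiff_id.mul contMDiff_const).mul contMDiff_id.inv : ContMDiff 𝓘(ℂ, E) 𝓘(ℂ, E) (⊤ : ℕ∞) _)).mdifferentiable (by simp)) y

lemma mdiff_diag (y : G) :
    MDifferentiableAt 𝓘(ℂ, E) (𝓘(ℂ, E).prod 𝓘(ℂ, E)) (fun h : G => (h, h⁻¹)) y :=
  mdifferentiableAt_id.prodMk (mdiff_inv_pt y)

/-- Derivative of the "graph of inversion" map at 1. -/
lemma mfderiv_diag_apply (v : E) :
    (mfderiv 𝓘(ℂ, E) (𝓘(ℂ, E).prod 𝓘(ℂ, E)) (fun h : G => (h, h⁻¹)) (1 : G)) v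
      = (v, (mfderiv 𝓘(ℂ, E) 𝓘(ℂ, E) (fun h : G => h⁻¹) (1 : G)) v) := by
  have h := (mdifferentiableAt_id (I := 𝓘(ℂ, E)) (x := (1 : G))).mfderiv_prod (mdiff_inv_pt 1)
  rw [mfderiv_id] at h
  exact DFunLike.congr_fun h v

/-- Smoothness of the adjoint-type map. -/
lemma ad_mdiff : MDifferentiable (M' := E →L[ℂ] E) 𝓘(ℂ, E) 𝓘(ℂ, E →L[ℂ] E)
    (fun a : G => mder (fun x => a * x * a⁻¹) (1 : G)) := by
  intro a₀
  have hf : ContMDiffAt (𝓘(ℂ, E).prod 𝓘(ℂ, E)) 𝓘(ℂ, E) ((⊤ : ℕ∞) : WithTop ℕ∞)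
      (Function.uncurry (fun a x : G => a * x * a⁻¹)) (a₀, (1 : G)) := by
    exact ((contMDiff_fst.mul contMDiff_snd).mul contMDiff_fst.inv).contMDiffAt
  have h := hf.mfderiv (fun a x : G => a * x * a⁻¹) (fun _ => (1 : G))
    contMDiffAt_const (m := 1) (WithTop.coe_le_coe.mpr le_top)
  have heq : (inTangentCoordinates 𝓘(ℂ, E) 𝓘(ℂ, E) (fun _ : G => (1 : G))
      (fun a : G => a * 1 * a⁻¹)
      (fun a : G => mfderiv 𝓘(ℂ, E) 𝓘(ℂ, E) (fun x => a * x * a⁻¹) (1 : G)) a₀)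
      = fun a : G => mfderiv 𝓘(ℂ, E) 𝓘(ℂ, E) (fun x => a * x * a⁻¹) (1 : G) := by
    funext a
    erw [inTangentCoordinates_eq]
    · have h1 : ∀ v : E, (tangentBundleCore 𝓘(ℂ, E) G).coordChange (achart E (1 : G))
          (achart E (1 : G)) (1 : G) v = v := fun v =>
        (tangentBundleCore 𝓘(ℂ, E) G).coordChange_self (achart E (1 : G)) (1 : G)
          (mem_chart_source E (1 : G)) v
      simp only [mul_one, mul_inv_cancel]
      ext v
      exact (h1 _).trans (congrArg _ (h1 v))
    · exact mem_chart_source E (1 : G)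
    · simp only [mul_one, mul_inv_cancel]
      exact mem_chart_source E (1 : G)
  rw [heq] at h
  exact h.mdifferentiableAt one_ne_zero

/-- The differential of inversion at `1` is `-id`. -/
lemma mder_inv_one (v : E) :
    mder (E := E) (fun h : G => h⁻¹) (1 : G) v = -v := by
  have hF : MDifferentiableAt (𝓘(ℂ, E).prod 𝓘(ℂ, E)) 𝓘(ℂ, E)
      (fun q : G × G => q.1 * q.2) ((1 : G), (1 : G)⁻¹) := mdiff_mul_pt _
  have hc : mfderiv 𝓘(ℂ, E) 𝓘(ℂ, E)
      ((fun q : G × G => q.1 * q.2) ∘ (fun h : G => (h, h⁻¹))) (1 : G)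
      = (mfderiv (𝓘(ℂ, E).prod 𝓘(ℂ, E)) 𝓘(ℂ, E) (fun q : G × G => q.1 * q.2)
          ((1 : G), (1 : G)⁻¹)).comp
        (mfderiv 𝓘(ℂ, E) (𝓘(ℂ, E).prod 𝓘(ℂ, E)) (fun h : G => (h, h⁻¹)) (1 : G)) :=
    mfderiv_comp (1 : G) hF (mdiff_diag 1)
  have h1 : ((fun q : G × G => q.1 * q.2) ∘ (fun h : G => (h, h⁻¹))) = fun _ : G => (1 : G) := by
    funext h; simp
  have h2 : mder (E := E) ((fun q : G × G => q.1 * q.2) ∘ (fun h : G => (h, h⁻¹))) (1 : G) = 0 := by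
    rw [mder_fun_congr _ h1, mder_const]
  have h0 : (mfderiv (𝓘(ℂ, E).prod 𝓘(ℂ, E)) 𝓘(ℂ, E) (fun q : G × G => q.1 * q.2)
      ((1 : G), (1 : G)⁻¹))
      ((mfderiv 𝓘(ℂ, E) (𝓘(ℂ, E).prod 𝓘(ℂ, E)) (fun h : G => (h, h⁻¹)) (1 : G)) v) = 0 :=
    DFunLike.congr_fun (hc.symm.trans h2) v
  rw [mfderiv_diag_apply] at h0
  erw [mfderiv_prod_eq_add_apply hF] at h0
  have h3 : mder (fun z : G => z * (1 : G)⁻¹) (1 : G) v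
      + mder (fun z : G => (1 : G) * z) ((1 : G)⁻¹) (mder (E := E) (fun h : G => h⁻¹) (1 : G) v)
      = (0 : E) := h0
  rw [mder_pt_congr (fun z : G => (1 : G) * z) inv_one] at h3
  have e1 : (fun z : G => z * (1 : G)⁻¹) = (id : G → G) := by funext z; simp
  have e2 : (fun z : G => (1 : G) * z) = (id : G → G) := by funext z; simp
  rw [mder_fun_congr _ e1, mder_fun_congr _ e2, mder_id] at h3
  simp only [ContinuousLinearMap.id_apply] at h3
  rw [add_comm] at h3
  exact eq_neg_of_add_eq_zero_left h3

/-- Right translations and left translations have the same derivative at 1, given that the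
adjoint maps are the identity. -/
lemma mder_right_eq_left (x : G)
    (hAd : ∀ z : G, mder (E := E) (fun y : G => z * y * z⁻¹) (1 : G)
      = ContinuousLinearMap.id ℂ E) :
    mder (E := E) (fun u : G => u * x) (1 : G) = mder (fun u : G => x * u) (1 : G) := by
  have hAd' : mder (E := E) (fun y : G => x⁻¹ * y * x) (1 : G) = ContinuousLinearMap.id ℂ E := by
    have : (fun y : G => x⁻¹ * y * x) = (fun y : G => x⁻¹ * y * x⁻¹⁻¹) := by
      funext y; rw [inv_inv]
    rw [mder_fun_congr _ this]; exact hAd x⁻¹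
  have hcmp : (fun u : G => u * x) = (fun u : G => x * u) ∘ (fun u : G => x⁻¹ * u * x) := by
    funext u; simp [mul_assoc]
  rw [mder_fun_congr _ hcmp,
    mder_comp _ _ _ (mdiff_mul_left x _) (mdiff_conj x⁻¹ x 1), hAd',
    ContinuousLinearMap.comp_id]
  exact mder_pt_congr _ (by simp)

/-- The conjugation-orbit map `h ↦ h * x * h⁻¹` has zero derivative at 1. -/
lemma mder_cx'_one (x : G)
    (hAd : ∀ z : G, mder (E := E) (fun y : G => z * y * z⁻¹) (1 : G)
      = ContinuousLinearMap.id ℂ E) :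
    mder (E := E) (fun h : G => h * x * h⁻¹) (1 : G) = 0 := by
  ext v
  have hF : MDifferentiableAt (𝓘(ℂ, E).prod 𝓘(ℂ, E)) 𝓘(ℂ, E)
      (fun q : G × G => q.1 * x * q.2) ((1 : G), (1 : G)⁻¹) :=
    ((((contMDiff_fst.mul contMDiff_const).mul contMDiff_snd : ContMDiff (𝓘(ℂ, E).prod 𝓘(ℂ, E)) 𝓘(ℂ, E) (⊤ : ℕ∞) _)).mdifferentiable (by simp)) _
  have hc : mfderiv 𝓘(ℂ, E) 𝓘(ℂ, E)
      ((fun q : G × G => q.1 * x * q.2) ∘ (fun h : G => (h, h⁻¹))) (1 : G)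
      = (mfderiv (𝓘(ℂ, E).prod 𝓘(ℂ, E)) 𝓘(ℂ, E) (fun q : G × G => q.1 * x * q.2)
          ((1 : G), (1 : G)⁻¹)).comp
        (mfderiv 𝓘(ℂ, E) (𝓘(ℂ, E).prod 𝓘(ℂ, E)) (fun h : G => (h, h⁻¹)) (1 : G)) :=
    mfderiv_comp (1 : G) hF (mdiff_diag 1)
  have h0 : (mfderiv 𝓘(ℂ, E) 𝓘(ℂ, E) (fun h : G => h * x * h⁻¹) (1 : G)) v
      = (mfderiv (𝓘(ℂ, E).prod 𝓘(ℂ, E)) 𝓘(ℂ, E) (fun q : G × G => q.1 * x * q.2)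
          ((1 : G), (1 : G)⁻¹))
        ((mfderiv 𝓘(ℂ, E) (𝓘(ℂ, E).prod 𝓘(ℂ, E)) (fun h : G => (h, h⁻¹)) (1 : G)) v) :=
    DFunLike.congr_fun hc v
  rw [mfderiv_diag_apply] at h0
  erw [mfderiv_prod_eq_add_apply hF] at h0
  have h3 : mder (E := E) (fun h : G => h * x * h⁻¹) (1 : G) v
      = mder (fun z : G => z * x * (1 : G)⁻¹) (1 : G) v
        + mder (fun z : G => (1 : G) * x * z) ((1 : G)⁻¹)
          (mder (E := E) (fun h : G => h⁻¹) (1 : G) v) := h0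
  rw [mder_pt_congr (fun z : G => (1 : G) * x * z) inv_one] at h3
  have e1 : (fun z : G => z * x * (1 : G)⁻¹) = (fun z : G => z * x) := by funext z; simp
  have e2 : (fun z : G => (1 : G) * x * z) = (fun z : G => x * z) := by funext z; simp
  rw [mder_fun_congr _ e1, mder_fun_congr _ e2, mder_inv_one,
    mder_right_eq_left x hAd] at h3
  rw [map_neg, add_neg_cancel] at h3
  exact h3

/-- The conjugation-orbit map has zero derivative everywhere. -/
lemma mder_conj_orbit_zero (x a₀ : G)
    (hAd : ∀ z : G, mder (E := E) (fun y : G => z * y * z⁻¹) (1 : G)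
      = ContinuousLinearMap.id ℂ E) :
    mder (E := E) (fun a : G => a * x * a⁻¹) a₀ = 0 := by
  have h1 : (fun a : G => a * x * a⁻¹)
      = ((fun y : G => a₀ * y * a₀⁻¹) ∘ (fun h : G => h * x * h⁻¹)) ∘ (fun a : G => a₀⁻¹ * a) := by
    funext a; simp only [Function.comp_apply]; group
  have hg : MDifferentiableAt 𝓘(ℂ, E) 𝓘(ℂ, E)
      ((fun y : G => a₀ * y * a₀⁻¹) ∘ (fun h : G => h * x * h⁻¹)) ((fun a : G => a₀⁻¹ * a) a₀) :=
    (mdiff_conj a₀ a₀⁻¹ _).comp _ (mdiff_cx' x _)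
  have h2 : mder (E := E)
      ((fun y : G => a₀ * y * a₀⁻¹) ∘ (fun h : G => h * x * h⁻¹)) (1 : G) = 0 := by
    rw [mder_comp _ _ _ (mdiff_conj a₀ a₀⁻¹ _) (mdiff_cx' x 1), mder_cx'_one x hAd]
    exact ContinuousLinearMap.comp_zero _
  rw [mder_fun_congr _ h1, mder_comp _ _ _ hg (mdiff_mul_left a₀⁻¹ a₀),
    mder_pt_congr _ (show (fun a : G => a₀⁻¹ * a) a₀ = 1 by simp), h2]
  exact ContinuousLinearMap.zero_comp _

/-- Using the Cousin property, all the adjoint maps are the identity. -/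
lemma ad_eq_id
    (hcousin : ∀ g : G → ℂ, MDifferentiable 𝓘(ℂ, E) 𝓘(ℂ, ℂ) g → ∀ x y : G, g x = g y)
    (z : G) : mder (E := E) (fun y : G => z * y * z⁻¹) (1 : G) = ContinuousLinearMap.id ℂ E := by
  ext v
  simp only [ContinuousLinearMap.id_apply]
  by_contra hne
  obtain ⟨ℓ, hℓ⟩ := SeparatingDual.exists_separating_of_ne (R := ℂ) hne
  have hin : MDifferentiable 𝓘(ℂ, E) 𝓘(ℂ, E)
      (fun a : G => mder (E := E) (fun y : G => a * y * a⁻¹) (1 : G) v) := fun a =>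
    (ad_mdiff a).clm_apply mdifferentiableAt_const
  have hfun : MDifferentiable 𝓘(ℂ, E) 𝓘(ℂ, ℂ)
      (fun a : G => ℓ (mder (E := E) (fun y : G => a * y * a⁻¹) (1 : G) v)) :=
    (ℓ.differentiable.mdifferentiable).comp hin
  have h1 := hcousin _ hfun z 1
  have h2 : mder (E := E) (fun y : G => (1 : G) * y * (1 : G)⁻¹) (1 : G)
      = ContinuousLinearMap.id ℂ E := by
    have e : (fun y : G => (1 : G) * y * (1 : G)⁻¹) = (id : G → G) := by funext y; simp
    rw [mder_fun_congr _ e, mder_id]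
  exact hℓ (by rw [h1, h2]; rfl)
end Aux


/-- **Cousin groups are commutative.**
A connected complex Lie group `G` (modeled on a finite-dimensional complex normed space `E`)
on which every holomorphic function `G → ℂ` is constant, is commutative. -/
theorem cousin_group_commutative
    {E : Type*} [NormedAddCommGroup E] [NormedSpace ℂ E] [FiniteDimensional ℂ E]
    {G : Type*} [TopologicalSpace G] [ChartedSpace E G] [Group G] [IsTopologicalGroup G]
    [LieGroup 𝓘(ℂ, E) (⊤ : ℕ∞) G] [ConnectedSpace G]
    (hcousin : ∀ g : G → ℂ, MDifferentiable 𝓘(ℂ, E) 𝓘(ℂ, ℂ) g → ∀ x y : G, g x = g y) :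
    ∀ a b : G, a * b = b * a := by
  have hAd : ∀ z : G, mder (E := E) (fun y : G => z * y * z⁻¹) (1 : G)
      = ContinuousLinearMap.id ℂ E := ad_eq_id hcousin
  have key : ∀ (x a : G), a * x * a⁻¹ = x := by
    intro x
    set k : G → G := fun a => a * x * a⁻¹ with hk
    have hkc : Continuous k := by
      have : ContMDiff 𝓘(ℂ, E) 𝓘(ℂ, E) ((⊤ : ℕ∞) : WithTop ℕ∞) k := (contMDiff_id.mul contMDiff_const).mul
        contMDiff_id.inv
      exact this.continuous
    have hkm : ∀ y : G, MDifferentiableAt 𝓘(ℂ, E) 𝓘(ℂ, E) k y := mdiff_cx' x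
    set S : Set G := {a : G | k a = x} with hS
    have hSeq : S = (Subgroup.centralizer {x} : Set G) := by
      ext a
      simp only [hS, Set.mem_setOf_eq, hk, SetLike.mem_coe, Subgroup.mem_centralizer_iff,
        Set.mem_singleton_iff, forall_eq]
      constructor
      · intro h
        rw [mul_inv_eq_iff_eq_mul] at h
        exact h.symm
      · intro h
        rw [mul_inv_eq_iff_eq_mul]
        exact h.symm
    have hone : (1 : G) ∈ S := by simp [hS, hk]
    have hopen : IsOpen S := by
      rw [isOpen_iff_mem_nhds]
      intro a₀ ha₀
      have hka₀ : k a₀ = x := ha₀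
      set c := extChartAt 𝓘(ℂ, E) a₀ with hc
      set d := extChartAt 𝓘(ℂ, E) x with hd
      set U : Set G := c.source ∩ k ⁻¹' d.source with hUdef
      have hU : IsOpen U := (isOpen_extChartAt_source a₀).inter
        ((isOpen_extChartAt_source x).preimage hkc)
      have ha₀U : a₀ ∈ U := ⟨mem_extChartAt_source a₀, by
        simp only [Set.mem_preimage, hka₀]; exact mem_extChartAt_source x⟩
      have ht : IsOpen (c.target ∩ c.symm ⁻¹' U) :=
        (continuousOn_extChartAt_symm a₀).isOpen_inter_preimage
          (isOpen_extChartAt_target a₀) hU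
      have hmem : c a₀ ∈ c.target ∩ c.symm ⁻¹' U :=
        ⟨c.map_source (mem_extChartAt_source a₀), by
          rw [Set.mem_preimage, c.left_inv (mem_extChartAt_source a₀)]; exact ha₀U⟩
      obtain ⟨ε, hε, hball⟩ := Metric.isOpen_iff.mp ht _ hmem
      set F : E → E := d ∘ k ∘ c.symm with hF
      -- differentiability and zero derivative on the ball
      have hFd : ∀ b ∈ Metric.ball (c a₀) ε,
          MDifferentiableAt 𝓘(ℂ, E) 𝓘(ℂ, E) F b ∧ fderiv ℂ F b = 0 := by
        intro b hb
        obtain ⟨hbt, hbU⟩ := hball hb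
        have h1 : MDifferentiableAt 𝓘(ℂ, E) 𝓘(ℂ, E) c.symm b := by
          have h := mdifferentiableWithinAt_extChartAt_symm (I := 𝓘(ℂ, E)) (x := a₀) hbt
          apply h.mdifferentiableAt
          rw [ModelWithCorners.range_eq_univ]
          exact Filter.univ_mem
        have h2 : MDifferentiableAt 𝓘(ℂ, E) 𝓘(ℂ, E) k (c.symm b) := hkm _
        have h3 : MDifferentiableAt 𝓘(ℂ, E) 𝓘(ℂ, E) d (k (c.symm b)) := by
          apply mdifferentiableAt_extChartAt
          have := hbU.2
          rwa [Set.mem_preimage, hd, extChartAt_source] at this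
        have hdk : MDifferentiableAt 𝓘(ℂ, E) 𝓘(ℂ, E) (d ∘ k) (c.symm b) := h3.comp _ h2
        have hFb : MDifferentiableAt 𝓘(ℂ, E) 𝓘(ℂ, E) F b := hdk.comp _ h1
        refine ⟨hFb, ?_⟩
        have hcomp1 : mfderiv 𝓘(ℂ, E) 𝓘(ℂ, E) (d ∘ k) (c.symm b)
            = (mfderiv 𝓘(ℂ, E) 𝓘(ℂ, E) d (k (c.symm b))).comp
              (mfderiv 𝓘(ℂ, E) 𝓘(ℂ, E) k (c.symm b)) := mfderiv_comp _ h3 h2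
        have hzero : (mfderiv 𝓘(ℂ, E) 𝓘(ℂ, E) k (c.symm b) : E →L[ℂ] E) = 0 :=
          mder_conj_orbit_zero x _ hAd
        have hdk0 : (mfderiv 𝓘(ℂ, E) 𝓘(ℂ, E) (d ∘ k) (c.symm b) : E →L[ℂ] E) = 0 := by
          rw [hcomp1, hzero]
          exact ContinuousLinearMap.comp_zero _
        have hcomp2 : mfderiv 𝓘(ℂ, E) 𝓘(ℂ, E) F b
            = (mfderiv 𝓘(ℂ, E) 𝓘(ℂ, E) (d ∘ k) (c.symm b)).comp
              (mfderiv 𝓘(ℂ, E) 𝓘(ℂ, E) c.symm b) := mfderiv_comp _ hdk h1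
        have hF0 : mfderiv 𝓘(ℂ, E) 𝓘(ℂ, E) F b = 0 := by
          rw [hcomp2, hdk0]
          exact ContinuousLinearMap.zero_comp _
        rw [← mfderiv_eq_fderiv]
        exact hF0
      -- F is constant on the ball
      have hconst : ∀ b ∈ Metric.ball (c a₀) ε, F b = F (c a₀) := by
        intro b hb
        apply (convex_ball (c a₀) ε).is_const_of_fderivWithin_eq_zero
          (fun y hy => ((hFd y hy).1.differentiableAt ).differentiableWithinAt) ?_ hb
          (Metric.mem_ball_self hε)
        · intro y hy
          rw [fderivWithin_of_isOpen Metric.isOpen_ball hy]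
          exact (hFd y hy).2
      -- conclude: a neighborhood of a₀ is inside S
      have hV : IsOpen (U ∩ c ⁻¹' Metric.ball (c a₀) ε) :=
        ((continuousOn_extChartAt a₀).mono Set.inter_subset_left).isOpen_inter_preimage hU
          Metric.isOpen_ball
      apply Filter.mem_of_superset (hV.mem_nhds ⟨ha₀U, by
        simp only [Set.mem_preimage]; exact Metric.mem_ball_self hε⟩)
      rintro a ⟨haU, hab⟩
      have hca : c a ∈ Metric.ball (c a₀) ε := hab
      have h5 : F (c a) = F (c a₀) := hconst _ hca
      have h6 : c.symm (c a) = a := c.left_inv haU.1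
      have h7 : d (k a) = d x := by
        have : F (c a) = d (k a) := by rw [hF]; simp only [Function.comp_apply, h6]
        have h8 : F (c a₀) = d x := by
          rw [hF]; simp only [Function.comp_apply, c.left_inv (mem_extChartAt_source a₀), hka₀]
        rw [← this, h5, h8]
      have hmem1 : k a ∈ d.source := haU.2
      have hmem2 : x ∈ d.source := mem_extChartAt_source x
      exact d.injOn hmem1 hmem2 h7
    have hclosed : IsClosed S := by
      rw [hSeq]
      exact (Subgroup.centralizer {x}).isClosed_of_isOpen (hSeq ▸ hopen)
    have hSuniv : S = Set.univ := (IsClopen.eq_univ ⟨hclosed, hopen⟩ ⟨1, hone⟩)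
    intro a
    have : a ∈ S := hSuniv ▸ Set.mem_univ a
    exact this
  intro a b
  have := key b a
  calc a * b = (a * b * a⁻¹) * a := by group
  _ = b * a := by rw [this]
end

section
/- Let W be a finite-dimensional complex vector space with conjugation σ and real points V. For a weight-1 Hodge decomposition A of (W, σ), every v ∈ V is uniquely of the form v = a + σ(a) with a ∈ A, and the rule I_A(a + σ(a)) := (i • a) + σ(i • a) defines an ℝ-linear operator I_A : V → V with I_A ∘ I_A = −id. Moreover the assignment A ↦ I_A is a bijection from the set of weight-1 Hodge decompositions of (W, σ) onto the set of ℝ-linear operators I : V → V with I ∘ I = −id. -/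
/-- The real points of a conjugation `σ` on a complex vector space `W`:
the `ℝ`-subspace `{w | σ w = w}`. -/
def realPoints {W : Type*} [AddCommGroup W] [Module ℂ W] (σ : W →ₗ[ℝ] W) :
    Submodule ℝ W where
  carrier := {w | σ w = w}
  add_mem' := by
    intro a b ha hb
    simp only [Set.mem_setOf_eq] at *
    rw [map_add, ha, hb]
  zero_mem' := by simp
  smul_mem' := by
    intro c a ha
    simp only [Set.mem_setOf_eq] at *
    rw [map_smul, ha]

/-- A weight-1 Hodge decomposition of `(W, σ)`: a complex subspace `A ⊆ W`
with `W = A ⊕ σ(A)` (as real subspaces, equivalently as sets). -/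
def IsHodge1 {W : Type*} [AddCommGroup W] [Module ℂ W] (σ : W →ₗ[ℝ] W)
    (A : Submodule ℂ W) : Prop :=
  IsCompl (A.restrictScalars ℝ) ((A.restrictScalars ℝ).map σ)

/-- `I` is the complex-structure operator on the real points associated to the
weight-1 Hodge decomposition `A`, i.e. `I (a + σ a) = i • a + σ (i • a)` for `a ∈ A`. -/
def IsHodgeOperator {W : Type*} [AddCommGroup W] [Module ℂ W] (σ : W →ₗ[ℝ] W)
    (A : Submodule ℂ W) (I : realPoints σ →ₗ[ℝ] realPoints σ) : Prop :=
  ∀ a ∈ A, ∀ v : realPoints σ, (v : W) = a + σ a →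
    (I v : W) = Complex.I • a + σ (Complex.I • a)

/-! Given a Hodge decomposition `A`, the map `a ↦ a + σ a` is an `ℝ`-linear isomorphism
`A ≃ V`: it is injective because `A ∩ σ(A) = 0`, and surjective because a real `x + σ z`
(`x, z ∈ A`) forces `x - z ∈ A ∩ σ(A)`. The operator `I_A` is multiplication by `i`
transported along this isomorphism, hence `I_A² = -1` and it is unique.

Conversely, `a` is recovered from `v = a + σ a` as `a = (v - i • I_A v) / 2`, so `A` is the
image of `v ↦ (v - i • I v) / 2`, which pins `A` down by `I_A`. For an arbitrary `I` with
`I² = -1` this image is a complex subspace (as `v ↦ I v` becomes multiplication by `i`), and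
it is a Hodge decomposition because `W = V ⊕ i V` and both `v` and `i • v` split into
`A`- and `σ(A)`-components. -/

section

open ComplexConjugate

variable {W : Type*} [AddCommGroup W] [Module ℂ W] {σ : W →ₗ[ℝ] W}

lemma add_apply_mem_realPoints (hσ : ∀ w, σ (σ w) = w) (w : W) :
    w + σ w ∈ realPoints σ := by
  change σ (w + σ w) = w + σ w
  rw [map_add, hσ, add_comm]

lemma IsHodge1.eq_zero_of_eq_apply {A : Submodule ℂ W} (hA : IsHodge1 σ A) {a b : W}
    (ha : a ∈ A) (hb : b ∈ A) (hab : a = σ b) : a = 0 :=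
  Submodule.disjoint_def.mp hA.disjoint a ha ⟨b, hb, hab.symm⟩

noncomputable def addConj (hσ : ∀ w, σ (σ w) = w) (A : Submodule ℂ W) :
    A →ₗ[ℝ] realPoints σ :=
  ((LinearMap.id + σ) ∘ₗ A.subtype.restrictScalars ℝ).codRestrict (realPoints σ)
    fun a => add_apply_mem_realPoints hσ a

lemma addConj_bijective (hσ : ∀ w, σ (σ w) = w) {A : Submodule ℂ W} (hA : IsHodge1 σ A) :
    Function.Bijective (addConj hσ A) := by
  refine ⟨(injective_iff_map_eq_zero _).mpr fun a ha => ?_, fun v => ?_⟩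
  · have h : (a : W) = σ (-a) := by
      rw [map_neg, eq_neg_iff_add_eq_zero]
      exact congrArg Subtype.val ha
    exact Subtype.ext (hA.eq_zero_of_eq_apply a.2 (neg_mem a.2) h)
  · obtain ⟨x, hx, _, ⟨z, hz, rfl⟩, hxz⟩ :=
      Submodule.mem_sup.mp (hA.codisjoint.eq_top ▸ Submodule.mem_top (x := (v : W)))
    have hv : σ v = v := v.2
    have h : x - z = σ (x - z) := by
      rw [← hxz, map_add, hσ] at hv
      rw [map_sub, sub_eq_sub_iff_add_eq_add]
      exact hv.symm
    obtain rfl : x = z :=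
      sub_eq_zero.mp (hA.eq_zero_of_eq_apply (sub_mem hx hz) (sub_mem hx hz) h)
    exact ⟨⟨x, hx⟩, Subtype.ext hxz⟩

lemma IsHodge1.existsUnique_add_apply (hσ : ∀ w, σ (σ w) = w) {A : Submodule ℂ W}
    (hA : IsHodge1 σ A) {w : W} (hw : σ w = w) : ∃! a, a ∈ A ∧ w = a + σ a := by
  obtain ⟨a, ha⟩ := (addConj_bijective hσ hA).surjective ⟨w, hw⟩
  refine ⟨a, ⟨a.2, congrArg Subtype.val ha.symm⟩, ?_⟩
  rintro b ⟨hb, rfl⟩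
  exact congrArg Subtype.val ((addConj_bijective hσ hA).injective (a₁ := ⟨b, hb⟩) ha.symm)

noncomputable def hodgeEquiv (hσ : ∀ w, σ (σ w) = w) {A : Submodule ℂ W}
    (hA : IsHodge1 σ A) : A ≃ₗ[ℝ] realPoints σ :=
  LinearEquiv.ofBijective _ (addConj_bijective hσ hA)

noncomputable def hodgeOperator (hσ : ∀ w, σ (σ w) = w) {A : Submodule ℂ W}
    (hA : IsHodge1 σ A) : Module.End ℝ (realPoints σ) :=
  (hodgeEquiv hσ hA).conjRingEquiv (Module.toModuleEnd ℝ A Complex.I)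

lemma isHodgeOperator_hodgeOperator (hσ : ∀ w, σ (σ w) = w) {A : Submodule ℂ W}
    (hA : IsHodge1 σ A) : IsHodgeOperator σ A (hodgeOperator hσ hA) := by
  intro a ha v hv
  obtain rfl : v = hodgeEquiv hσ hA ⟨a, ha⟩ := Subtype.ext hv
  rw [hodgeOperator, LinearEquiv.conjRingEquiv_apply_apply, LinearEquiv.symm_apply_apply]
  rfl

lemma IsHodgeOperator.eq_hodgeOperator (hσ : ∀ w, σ (σ w) = w) {A : Submodule ℂ W}
    (hA : IsHodge1 σ A) {I : Module.End ℝ (realPoints σ)} (hI : IsHodgeOperator σ A I) :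
    I = hodgeOperator hσ hA := by
  ext v
  obtain ⟨a, rfl⟩ := (hodgeEquiv hσ hA).surjective v
  rw [hI a a.2 _ rfl, isHodgeOperator_hodgeOperator hσ hA a a.2 _ rfl]

lemma hodgeOperator_apply_apply (hσ : ∀ w, σ (σ w) = w) {A : Submodule ℂ W}
    (hA : IsHodge1 σ A) (v : realPoints σ) :
    hodgeOperator hσ hA (hodgeOperator hσ hA v) = -v := by
  rw [← Module.End.mul_apply, hodgeOperator, ← map_mul, ← map_mul, Complex.I_mul_I, map_neg,
    map_one, map_neg, map_one]
  rfl

noncomputable def holomorphicPart (I : Module.End ℝ (realPoints σ)) :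
    realPoints σ →ₗ[ℝ] W where
  toFun v := (2 : ℝ)⁻¹ • ((v : W) - Complex.I • (I v : W))
  map_add' v w := by simp only [map_add, Submodule.coe_add]; module
  map_smul' r v := by simp only [map_smul, SetLike.val_smul, RingHom.id_apply]; module

lemma holomorphicPart_apply (I : Module.End ℝ (realPoints σ)) (v : realPoints σ) :
    holomorphicPart I v = (2 : ℝ)⁻¹ • ((v : W) - Complex.I • (I v : W)) := rfl

lemma apply_holomorphicPart (hconj : ∀ (c : ℂ) (w : W), σ (c • w) = conj c • σ w)
    (I : Module.End ℝ (realPoints σ)) (v : realPoints σ) :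
    σ (holomorphicPart I v) = (2 : ℝ)⁻¹ • ((v : W) + Complex.I • (I v : W)) := by
  rw [holomorphicPart_apply, map_smul, map_sub, hconj, Complex.conj_I, (v.2 : σ v = v),
    ((I v).2 : σ (I v) = I v)]
  module

lemma holomorphicPart_add_apply (hconj : ∀ (c : ℂ) (w : W), σ (c • w) = conj c • σ w)
    (I : Module.End ℝ (realPoints σ)) (v : realPoints σ) :
    holomorphicPart I v + σ (holomorphicPart I v) = v := by
  rw [apply_holomorphicPart hconj, holomorphicPart_apply]
  module

lemma holomorphicPart_sub_apply (hconj : ∀ (c : ℂ) (w : W), σ (c • w) = conj c • σ w)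
    (I : Module.End ℝ (realPoints σ)) (v : realPoints σ) :
    holomorphicPart I v - σ (holomorphicPart I v) = -(Complex.I • (I v : W)) := by
  rw [apply_holomorphicPart hconj, holomorphicPart_apply]
  module

lemma IsHodgeOperator.holomorphicPart_apply_eq
    (hconj : ∀ (c : ℂ) (w : W), σ (c • w) = conj c • σ w)
    {A : Submodule ℂ W} {I : Module.End ℝ (realPoints σ)} (hI : IsHodgeOperator σ A I)
    {a : W} (ha : a ∈ A) {v : realPoints σ} (hv : (v : W) = a + σ a) :
    holomorphicPart I v = a := by
  rw [holomorphicPart_apply, hI a ha v hv, hv, hconj, Complex.conj_I]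
  match_scalars
  · linear_combination (-2⁻¹ : ℂ) * Complex.I_mul_I
  · linear_combination (2⁻¹ : ℂ) * Complex.I_mul_I

lemma IsHodgeOperator.restrictScalars_eq_range (hσ : ∀ w, σ (σ w) = w)
    (hconj : ∀ (c : ℂ) (w : W), σ (c • w) = conj c • σ w)
    {A : Submodule ℂ W} (hA : IsHodge1 σ A) {I : Module.End ℝ (realPoints σ)}
    (hI : IsHodgeOperator σ A I) :
    A.restrictScalars ℝ = LinearMap.range (holomorphicPart I) := by
  ext a
  refine ⟨fun ha => ⟨⟨a + σ a, add_apply_mem_realPoints hσ a⟩,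
    hI.holomorphicPart_apply_eq hconj ha rfl⟩, ?_⟩
  rintro ⟨v, rfl⟩
  obtain ⟨a, rfl⟩ := (hodgeEquiv hσ hA).surjective v
  rw [hI.holomorphicPart_apply_eq hconj a.2 rfl]
  exact a.2

lemma IsHodgeOperator.submodule_eq (hσ : ∀ w, σ (σ w) = w)
    (hconj : ∀ (c : ℂ) (w : W), σ (c • w) = conj c • σ w)
    {A A' : Submodule ℂ W} (hA : IsHodge1 σ A) (hA' : IsHodge1 σ A')
    {I : Module.End ℝ (realPoints σ)} (hI : IsHodgeOperator σ A I)
    (hI' : IsHodgeOperator σ A' I) :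
    A = A' :=
  Submodule.restrictScalars_injective ℝ _ _ <|
    (hI.restrictScalars_eq_range hσ hconj hA).trans
      (hI'.restrictScalars_eq_range hσ hconj hA').symm

lemma holomorphicPart_apply_apply {I : Module.End ℝ (realPoints σ)} (hI : ∀ v, I (I v) = -v)
    (v : realPoints σ) : holomorphicPart I (I v) = Complex.I • holomorphicPart I v := by
  rw [holomorphicPart_apply, holomorphicPart_apply, hI, Submodule.coe_neg]
  match_scalars
  · linear_combination (2⁻¹ : ℂ) * Complex.I_mul_I
  · ring

lemma exists_eq_add_I_smul (hσ : ∀ w, σ (σ w) = w)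
    (hconj : ∀ (c : ℂ) (w : W), σ (c • w) = conj c • σ w) (w : W) :
    ∃ v₁ v₂ : realPoints σ, w = v₁ + Complex.I • (v₂ : W) := by
  refine ⟨⟨(2 : ℝ)⁻¹ • (w + σ w), ?_⟩, ⟨(2 : ℝ)⁻¹ • -Complex.I • (w - σ w), ?_⟩, ?_⟩
  · change σ _ = _
    rw [map_smul, map_add, hσ, add_comm]
  · change σ _ = _
    rw [map_smul, hconj, map_sub, hσ, map_neg, Complex.conj_I]
    module
  · match_scalars
    · linear_combination (2⁻¹ : ℂ) * Complex.I_mul_I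
    · linear_combination (-2⁻¹ : ℂ) * Complex.I_mul_I

noncomputable def holomorphicSubspace (I : Module.End ℝ (realPoints σ))
    (hI : ∀ v, I (I v) = -v) : Submodule ℂ W where
  carrier := Set.range (holomorphicPart I)
  add_mem' := by
    rintro _ _ ⟨v, rfl⟩ ⟨u, rfl⟩
    exact ⟨v + u, map_add _ _ _⟩
  zero_mem' := ⟨0, map_zero _⟩
  smul_mem' := by
    rintro c _ ⟨v, rfl⟩
    refine ⟨c.re • v + c.im • I v, ?_⟩
    rw [map_add, map_smul, map_smul, holomorphicPart_apply_apply hI]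
    conv_rhs => rw [← Complex.re_add_im c]
    module

lemma isHodge1_holomorphicSubspace (hσ : ∀ w, σ (σ w) = w)
    (hconj : ∀ (c : ℂ) (w : W), σ (c • w) = conj c • σ w)
    {I : Module.End ℝ (realPoints σ)} (hI : ∀ v, I (I v) = -v) :
    IsHodge1 σ (holomorphicSubspace I hI) := by
  constructor
  · rw [Submodule.disjoint_def]
    rintro _ ⟨v, rfl⟩ ⟨_, ⟨u, rfl⟩, hu⟩
    -- `v` and `u` are both the real part `x + σ x` of the common element, so `σ` fixes it,
    -- which kills its imaginary part `-(i • I v)`.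
    have huv : u = v := by
      apply Subtype.ext
      rw [← holomorphicPart_add_apply hconj I u, ← holomorphicPart_add_apply hconj I v, ← hu, hσ,
        add_comm]
    subst huv
    have hIu : I u = 0 := by
      have h := holomorphicPart_sub_apply hconj I u
      rw [hu, sub_self, zero_eq_neg, smul_eq_zero] at h
      exact Subtype.ext (h.resolve_left Complex.I_ne_zero)
    have hu0 : u = 0 := by rw [← neg_neg u, ← hI u, hIu, map_zero, neg_zero]
    rw [hu0, map_zero]
  · rw [codisjoint_iff, eq_top_iff]
    rintro w -
    obtain ⟨v₁, v₂, rfl⟩ := exists_eq_add_I_smul hσ hconj w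
    refine Submodule.mem_sup.mpr ⟨holomorphicPart I (v₁ + I v₂), ⟨_, rfl⟩,
      σ (holomorphicPart I (v₁ - I v₂)), ⟨_, ⟨_, rfl⟩, rfl⟩, ?_⟩
    have h₁ := holomorphicPart_add_apply hconj I v₁
    have h₂ := holomorphicPart_sub_apply hconj I (I v₂)
    rw [hI, Submodule.coe_neg, smul_neg, neg_neg] at h₂
    rw [map_add, map_sub, map_sub, ← h₁, ← h₂]
    abel

lemma isHodgeOperator_holomorphicSubspace
    (hconj : ∀ (c : ℂ) (w : W), σ (c • w) = conj c • σ w)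
    {I : Module.End ℝ (realPoints σ)} (hI : ∀ v, I (I v) = -v) :
    IsHodgeOperator σ (holomorphicSubspace I hI) I := by
  rintro _ ⟨u, rfl⟩ v hv
  obtain rfl : v = u := Subtype.ext (hv.trans (holomorphicPart_add_apply hconj I u))
  rw [← holomorphicPart_apply_apply hI, holomorphicPart_add_apply hconj]

end

theorem weight_one_hodge_decompositions_biject_with_complex_structures_general
    {W : Type*} [AddCommGroup W] [Module ℂ W]
    (σ : W →ₗ[ℝ] W)
    (hinv : ∀ w : W, σ (σ w) = w)
    (hconj : ∀ (c : ℂ) (w : W), σ (c • w) = (starRingEnd ℂ) c • σ w) :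
    (∀ A : Submodule ℂ W, IsHodge1 σ A →
      ∀ w : W, σ w = w → ∃! a : W, a ∈ A ∧ w = a + σ a) ∧
    (∀ A : Submodule ℂ W, IsHodge1 σ A →
      ∃! I : realPoints σ →ₗ[ℝ] realPoints σ, IsHodgeOperator σ A I) ∧
    (∀ (A : Submodule ℂ W) (I : realPoints σ →ₗ[ℝ] realPoints σ),
      IsHodge1 σ A → IsHodgeOperator σ A I → ∀ v : realPoints σ, I (I v) = -v) ∧
    (∀ (A A' : Submodule ℂ W) (I : realPoints σ →ₗ[ℝ] realPoints σ),
      IsHodge1 σ A → IsHodge1 σ A' →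
      IsHodgeOperator σ A I → IsHodgeOperator σ A' I → A = A') ∧
    (∀ I : realPoints σ →ₗ[ℝ] realPoints σ, (∀ v : realPoints σ, I (I v) = -v) →
      ∃ A : Submodule ℂ W, IsHodge1 σ A ∧ IsHodgeOperator σ A I) := by
  refine ⟨fun A hA w hw => hA.existsUnique_add_apply hinv hw,
    fun A hA => ⟨hodgeOperator hinv hA, isHodgeOperator_hodgeOperator hinv hA,
      fun I hI => hI.eq_hodgeOperator hinv hA⟩,
    fun A I hA hI v => ?_,
    fun A A' I hA hA' hI hI' => hI.submodule_eq hinv hconj hA hA' hI',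
    fun I hI => ⟨holomorphicSubspace I hI, isHodge1_holomorphicSubspace hinv hconj hI,
      isHodgeOperator_holomorphicSubspace hconj hI⟩⟩
  rw [hI.eq_hodgeOperator hinv hA]
  exact hodgeOperator_apply_apply hinv hA v

/-- **Weight-1 Hodge decompositions are the same as complex structures on the real points.**
Let `W` be a finite-dimensional complex vector space with conjugation `σ` and real points
`V`.  For every weight-1 Hodge decomposition `A` of `(W, σ)`: every `v ∈ V` is uniquely of
the form `a + σ a` with `a ∈ A`; the rule `a + σ a ↦ i • a + σ (i • a)` determines a unique
`ℝ`-linear operator `I_A` on `V`, and it satisfies `I_A ∘ I_A = -id`.  Moreover `A ↦ I_A`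
is a bijection from weight-1 Hodge decompositions onto the operators `I : V → V` with
`I ∘ I = -id`. -/
theorem weight_one_hodge_decompositions_biject_with_complex_structures
    {W : Type*} [AddCommGroup W] [Module ℂ W] [FiniteDimensional ℂ W]
    (σ : W →ₗ[ℝ] W)
    (hinv : ∀ w : W, σ (σ w) = w)
    (hconj : ∀ (c : ℂ) (w : W), σ (c • w) = (starRingEnd ℂ) c • σ w) :
    (∀ A : Submodule ℂ W, IsHodge1 σ A →
      ∀ w : W, σ w = w → ∃! a : W, a ∈ A ∧ w = a + σ a) ∧
    (∀ A : Submodule ℂ W, IsHodge1 σ A →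
      ∃! I : realPoints σ →ₗ[ℝ] realPoints σ, IsHodgeOperator σ A I) ∧
    (∀ (A : Submodule ℂ W) (I : realPoints σ →ₗ[ℝ] realPoints σ),
      IsHodge1 σ A → IsHodgeOperator σ A I → ∀ v : realPoints σ, I (I v) = -v) ∧
    (∀ (A A' : Submodule ℂ W) (I : realPoints σ →ₗ[ℝ] realPoints σ),
      IsHodge1 σ A → IsHodge1 σ A' →
      IsHodgeOperator σ A I → IsHodgeOperator σ A' I → A = A') ∧
    (∀ I : realPoints σ →ₗ[ℝ] realPoints σ, (∀ v : realPoints σ, I (I v) = -v) →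
      ∃ A : Submodule ℂ W, IsHodge1 σ A ∧ IsHodgeOperator σ A I) :=
  weight_one_hodge_decompositions_biject_with_complex_structures_general σ hinv hconj
end

section
/- Let W be a finite-dimensional complex vector space with conjugation σ, and let (A, C) be a weight-2 Hodge decomposition of (W, σ). Let S := {a + w | a ∈ A, w ∈ C, σ(w) = w} (an ℝ-subspace of W, the image of the canonical embedding). Then S ∩ (i • S) = A, where i • S = {i • s | s ∈ S}; that is, the distinguished complex subspace of the CR structure induced on the image of the canonical embedding is exactly A. -/
/-! Writing `a + w = i • (a' + w')` with `a, a' ∈ A` and `w, w'` real points of `C`, the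
disjointness `A ⊓ C = ⊥` forced by uniqueness of the Hodge decomposition gives `w = i • w'`.
Then `w'` and `i • w'` are both fixed by `σ`, while `σ (i • w') = -i • w'`; hence `w' = 0`. -/

/-- A weight-2 Hodge decomposition of `(W, σ)`: a pair of complex subspaces
`A, C ⊆ W` with `W = A ⊕ C ⊕ σ(A)` (every `w ∈ W` has a unique expression
`w = a + c + σ a'` with `a, a' ∈ A`, `c ∈ C`) and `σ(C) = C`. -/
def IsHodge2 {W : Type*} [AddCommGroup W] [Module ℂ W] (σ : W →ₗ[ℝ] W)
    (A C : Submodule ℂ W) : Prop :=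
  (∀ w : W, ∃! t : W × W × W,
      t.1 ∈ A ∧ t.2.1 ∈ C ∧ t.2.2 ∈ A ∧ w = t.1 + t.2.1 + σ t.2.2) ∧
  σ '' (C : Set W) = (C : Set W)

open Complex

theorem Submodule.eq_of_add_eq_add_of_disjoint {R M : Type*} [Ring R] [AddCommGroup M]
    [Module R M] {p q : Submodule R M} (h : Disjoint p q) {a a' c c' : M} (ha : a ∈ p)
    (ha' : a' ∈ p) (hc : c ∈ q) (hc' : c' ∈ q) (heq : a + c = a' + c') : c = c' := by
  have hdiff : c - c' = a' - a := by
    rw [sub_eq_sub_iff_add_eq_add, add_comm c, heq, add_comm]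
  exact sub_eq_zero.mp <| Submodule.disjoint_def.mp h _ (hdiff ▸ p.sub_mem ha' ha)
    (q.sub_mem hc hc')

theorem IsHodge2.disjoint {W : Type*} [AddCommGroup W] [Module ℂ W] {σ : W →ₗ[ℝ] W}
    {A C : Submodule ℂ W} (h : IsHodge2 σ A C) : Disjoint A C := by
  refine Submodule.disjoint_def.mpr fun x hxA hxC => ?_
  obtain ⟨_, _, huniq⟩ := h.1 x
  have hA := huniq (x, 0, 0) ⟨hxA, C.zero_mem, A.zero_mem, by simp⟩
  have hC := huniq (0, x, 0) ⟨A.zero_mem, hxC, A.zero_mem, by simp⟩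
  exact congrArg (fun t : W × W × W => t.1) (hA.trans hC.symm)

theorem eq_zero_of_fixed_of_I_smul_fixed {W : Type*} [AddCommGroup W] [Module ℂ W]
    {σ : W →ₗ[ℝ] W} (hconj : ∀ (c : ℂ) (w : W), σ (c • w) = (starRingEnd ℂ) c • σ w)
    {x : W} (hx : σ x = x) (hIx : σ (I • x) = I • x) : x = 0 := by
  have hneg : I • x = -(I • x) := calc
    I • x = σ (I • x) := hIx.symm
    _ = -(I • x) := by rw [hconj, conj_I, hx, neg_smul]
  have htwice : (2 * I) • x = 0 := by
    rw [mul_smul, two_smul]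
    nth_rewrite 2 [hneg]
    exact add_neg_cancel _
  exact (smul_eq_zero.mp htwice).resolve_left (mul_ne_zero two_ne_zero I_ne_zero)

theorem canonical_embedding_image_CR_subspace_general
    {W : Type*} [AddCommGroup W] [Module ℂ W]
    (σ : W →ₗ[ℝ] W)
    (hconj : ∀ (c : ℂ) (w : W), σ (c • w) = (starRingEnd ℂ) c • σ w)
    (A C : Submodule ℂ W) (hAC : IsHodge2 σ A C) :
    {s : W | ∃ a ∈ A, ∃ w ∈ C, σ w = w ∧ s = a + w} ∩
        ((fun s : W => Complex.I • s) ''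
          {s : W | ∃ a ∈ A, ∃ w ∈ C, σ w = w ∧ s = a + w}) =
      (A : Set W) := by
  ext s
  constructor
  · rintro ⟨⟨a, ha, w, hw, hσw, rfl⟩, _, ⟨a', ha', w', hw', hσw', rfl⟩, heq⟩
    have hw_eq : w = I • w' := Submodule.eq_of_add_eq_add_of_disjoint hAC.disjoint ha
      (A.smul_mem I ha') hw (C.smul_mem I hw') (by rw [← smul_add]; exact heq.symm)
    have hw'0 : w' = 0 := eq_zero_of_fixed_of_I_smul_fixed hconj hσw' (hw_eq ▸ hσw)
    simpa [hw_eq, hw'0] using ha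
  · intro hs
    refine ⟨⟨s, hs, 0, C.zero_mem, map_zero σ, (add_zero s).symm⟩,
      -I • s, ⟨-I • s, A.smul_mem _ hs, 0, C.zero_mem, map_zero σ, (add_zero _).symm⟩, ?_⟩
    simp [smul_smul]

/-- **The distinguished complex subspace of the image of the canonical embedding.**
Let `W` be a finite-dimensional complex vector space with conjugation `σ`, and let
`(A, C)` be a weight-2 Hodge decomposition of `(W, σ)`.  Let
`S := {a + w | a ∈ A, w ∈ C, σ w = w}` be the image of the canonical embedding.
Then `S ∩ (i • S) = A`: the distinguished complex subspace of the induced CR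
structure on `S` is exactly `A`. -/
theorem canonical_embedding_image_CR_subspace
    {W : Type*} [AddCommGroup W] [Module ℂ W] [FiniteDimensional ℂ W]
    (σ : W →ₗ[ℝ] W)
    (hinv : ∀ w : W, σ (σ w) = w)
    (hconj : ∀ (c : ℂ) (w : W), σ (c • w) = (starRingEnd ℂ) c • σ w)
    (A C : Submodule ℂ W) (hAC : IsHodge2 σ A C) :
    {s : W | ∃ a ∈ A, ∃ w ∈ C, σ w = w ∧ s = a + w} ∩
        ((fun s : W => Complex.I • s) ''
          {s : W | ∃ a ∈ A, ∃ w ∈ C, σ w = w ∧ s = a + w}) =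
      (A : Set W) :=
  canonical_embedding_image_CR_subspace_general σ hconj A C hAC
end

section
/- Let W be a finite-dimensional complex vector space with conjugation σ and real points V, let A be a weight-1 Hodge decomposition of (W, σ), and let Q : W → W → ℂ be a ℂ-bilinear form such that: (i) Q(σ u, σ v) = conj(Q(u, v)) for all u, v; (ii) Q(v, u) = −Q(u, v) for all u, v; (iii) Q(u, v) = 0 for all u, v ∈ A; (iv) for every nonzero u ∈ A, the number i·Q(u, σ u) is a positive real. Let I_A : V → V be the operator with I_A(a + σ(a)) = (i • a) + σ(i • a). Then Q takes real values on V × V, Q(I_A x, I_A y) = Q(x, y) for all x, y ∈ V, and the form g(x, y) := Q(I_A x, y) on V is symmetric and positive definite (so g + i·Q is a Hermitian inner product on (V, I_A)). -/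
/-- **A polarization of a weight-1 Hodge structure yields a Hermitian inner product.**
Let `W` be a finite-dimensional complex vector space with conjugation `σ` and real points
`V = {w | σ w = w}`, let `A` be a weight-1 Hodge decomposition (`W = A ⊕ σ(A)`), and let
`Q` be a `ℂ`-bilinear form with `Q (σ u) (σ v) = conj (Q u v)`, antisymmetric, vanishing
on `A × A`, and with `i • Q u (σ u)` a positive real for `0 ≠ u ∈ A`.  Let `I` restrict on
`V` to the complex-structure operator of `A`, i.e. `I (a + σ a) = i • a + σ (i • a)`.
Then `Q` is real-valued on `V × V`, invariant under `I`, and `g (x, y) := Q (I x) y` is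
symmetric and positive definite on `V` (so `g + i Q` is a Hermitian inner product). -/
theorem polarized_weight_one_gives_hermitian
    {W : Type*} [AddCommGroup W] [Module ℂ W] [FiniteDimensional ℂ W]
    (σ : W →ₗ[ℝ] W)
    (hinv : ∀ w : W, σ (σ w) = w)
    (hconj : ∀ (c : ℂ) (w : W), σ (c • w) = (starRingEnd ℂ) c • σ w)
    (A : Submodule ℂ W)
    (hA : IsCompl (A.restrictScalars ℝ) ((A.restrictScalars ℝ).map σ))
    (Q : W →ₗ[ℂ] W →ₗ[ℂ] ℂ)
    (hQconj : ∀ u v : W, Q (σ u) (σ v) = (starRingEnd ℂ) (Q u v))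
    (hQalt : ∀ u v : W, Q v u = -Q u v)
    (hQA : ∀ u ∈ A, ∀ v ∈ A, Q u v = 0)
    (hQpos : ∀ u ∈ A, u ≠ 0 → ∃ r : ℝ, 0 < r ∧ Complex.I * Q u (σ u) = (r : ℂ))
    (I : W →ₗ[ℝ] W)
    (hI : ∀ a ∈ A, I (a + σ a) = Complex.I • a + σ (Complex.I • a)) :
    (∀ x y : W, σ x = x → σ y = y → (Q x y).im = 0) ∧
    (∀ x y : W, σ x = x → σ y = y → Q (I x) (I y) = Q x y) ∧
    (∀ x y : W, σ x = x → σ y = y → Q (I x) y = Q (I y) x) ∧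
    (∀ x : W, σ x = x → x ≠ 0 → 0 < (Q (I x) x).re) := by
  -- conjugation identity in the other direction
  have hconjQ : ∀ u v : W, Q u (σ v) = (starRingEnd ℂ) (Q (σ u) v) := by
    intro u v
    have h := hQconj (σ u) v
    rw [hinv] at h
    exact h
  have hsigI : ∀ w : W, σ (Complex.I • w) = (-Complex.I) • σ w := by
    intro w
    rw [hconj, Complex.conj_I]
  -- decomposition of real points
  have hdec : ∀ x : W, σ x = x → ∃ a ∈ A, x = a + σ a := by
    intro x hx
    obtain ⟨a, b, ha, hb, hab⟩ :=
      Submodule.codisjoint_iff_exists_add_eq.mp hA.codisjoint x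
    obtain ⟨c, hc, rfl⟩ := hb
    have ha' : a ∈ A := ha
    have hc' : c ∈ A := hc
    have h1 : σ a + c = a + σ c := by
      have h := hx
      rw [← hab] at h
      simpa [map_add, hinv] using h
    have hd : a - c = σ (a - c) := by
      rw [map_sub, sub_eq_sub_iff_add_eq_add]
      exact h1.symm
    have hmem : a - c ∈ (A.restrictScalars ℝ) ⊓ ((A.restrictScalars ℝ).map σ) := by
      constructor
      · exact Submodule.sub_mem _ ha' hc'
      · exact ⟨a - c, Submodule.sub_mem _ ha' hc', hd.symm⟩
    have h0 : a - c = 0 := by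
      have := hA.inf_eq_bot ▸ hmem
      simpa using this
    have hac : a = c := sub_eq_zero.mp h0
    exact ⟨a, ha', by rw [← hab, hac]⟩
  -- key computation
  have key : ∀ a ∈ A, ∀ b ∈ A, Q (a + σ a) (b + σ b)
      = Q a (σ b) + (starRingEnd ℂ) (Q a (σ b)) := by
    intro a ha b hb
    have h1 : Q a b = 0 := hQA a ha b hb
    have h2 : Q (σ a) (σ b) = 0 := by rw [hQconj, h1, map_zero]
    have h3 : Q (σ a) b = (starRingEnd ℂ) (Q a (σ b)) := by
      rw [hconjQ a b, Complex.conj_conj]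
    simp only [map_add, LinearMap.add_apply, h1, h2, h3]
    ring
  refine ⟨?_, ?_, ?_, ?_⟩
  · intro x y hx hy
    obtain ⟨a, ha, rfl⟩ := hdec x hx
    obtain ⟨b, hb, rfl⟩ := hdec y hy
    rw [key a ha b hb]
    simp [Complex.add_im]
  · intro x y hx hy
    obtain ⟨a, ha, rfl⟩ := hdec x hx
    obtain ⟨b, hb, rfl⟩ := hdec y hy
    rw [hI a ha, hI b hb, key _ (A.smul_mem _ ha) _ (A.smul_mem _ hb),
      key a ha b hb, hsigI b]
    simp only [map_smul, LinearMap.smul_apply, smul_eq_mul]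
    ring_nf
    simp [Complex.I_sq]
  · intro x y hx hy
    obtain ⟨a, ha, rfl⟩ := hdec x hx
    obtain ⟨b, hb, rfl⟩ := hdec y hy
    rw [hI a ha, hI b hb, key _ (A.smul_mem _ ha) _ hb,
      key _ (A.smul_mem _ hb) _ ha]
    have h1 : Q b (σ a) = -(starRingEnd ℂ) (Q a (σ b)) := by
      rw [hQalt, hconjQ a b, Complex.conj_conj]
    simp only [map_smul, LinearMap.smul_apply, smul_eq_mul, h1, map_mul, map_neg,
      Complex.conj_I, Complex.conj_conj]
    ring
  · intro x hx hx0
    obtain ⟨a, ha, rfl⟩ := hdec x hx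
    have ha0 : a ≠ 0 := by
      rintro rfl
      simp at hx0
    obtain ⟨r, hr, hrQ⟩ := hQpos a ha ha0
    rw [hI a ha, key _ (A.smul_mem _ ha) _ ha]
    simp only [map_smul, LinearMap.smul_apply, smul_eq_mul, hrQ, map_mul,
      Complex.conj_I, Complex.conj_ofReal]
    simp [Complex.add_re, Complex.ofReal_re]
    linarith
end

section
/- Let W be a finite-dimensional complex vector space with conjugation σ and real points V, let (A, C) be a weight-2 Hodge decomposition of (W, σ), and let Q : W → W → ℂ be a ℂ-bilinear form such that: (i) Q(σ u, σ v) = conj(Q(u, v)); (ii) Q(u, v) = Q(v, u); (iii) Q(u, v) = 0 whenever u, v ∈ A, or u ∈ A and v ∈ C, or u ∈ C and v ∈ σ(A), or u, v ∈ σ(A); (iv) for every nonzero u ∈ A the number −Q(u, σ u) is a positive real, and for every nonzero w ∈ C the number Q(w, σ w) is a positive real. Set H := {a + σ(a) | a ∈ A} and F := {w ∈ C | σ(w) = w}, and let I be the operator on H with I(a + σ(a)) = (i • a) + σ(i • a). Then Q is real-valued on V × V; the restriction of Q to H is negative definite and I-invariant (Q(I x, I y) = Q(x, y) for x, y ∈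 H); the restriction of Q to F is positive definite; and Q(x, y) = 0 for all x ∈ H, y ∈ F. -/
section HodgeForm

variable {W : Type*} [AddCommGroup W] [Module ℂ W] {σ : W →ₗ[ℝ] W} {Q : W →ₗ[ℂ] W →ₗ[ℂ] ℂ}
  {A : Submodule ℂ W}

theorem im_apply_eq_zero_of_apply_conj
    (hQconj : ∀ u v : W, Q (σ u) (σ v) = starRingEnd ℂ (Q u v))
    {x y : W} (hx : σ x = x) (hy : σ y = y) : (Q x y).im = 0 := by
  have h := hQconj x y
  rw [hx, hy] at h
  exact Complex.conj_eq_iff_im.mp h.symm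

theorem apply_add_conj_add_conj (hQsymm : ∀ u v : W, Q u v = Q v u)
    (hQAA : ∀ u ∈ A, ∀ v ∈ A, Q u v = 0) (hQσAσA : ∀ a ∈ A, ∀ a' ∈ A, Q (σ a) (σ a') = 0)
    {u v : W} (hu : u ∈ A) (hv : v ∈ A) :
    Q (u + σ u) (v + σ v) = Q u (σ v) + Q v (σ u) := by
  simp only [map_add, LinearMap.add_apply, hQAA u hu v hv, hQσAσA u hu v hv, hQsymm (σ u) v]
  ring

theorem re_apply_add_conj_self_neg (hQsymm : ∀ u v : W, Q u v = Q v u)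
    (hQAA : ∀ u ∈ A, ∀ v ∈ A, Q u v = 0) (hQσAσA : ∀ a ∈ A, ∀ a' ∈ A, Q (σ a) (σ a') = 0)
    (hQposA : ∀ u ∈ A, u ≠ 0 → ∃ r : ℝ, 0 < r ∧ -Q u (σ u) = (r : ℂ))
    {a : W} (ha : a ∈ A) (hx : a + σ a ≠ 0) : (Q (a + σ a) (a + σ a)).re < 0 := by
  have ha0 : a ≠ 0 := by rintro rfl; simp at hx
  obtain ⟨r, hr, hQ⟩ := hQposA a ha ha0
  rw [apply_add_conj_add_conj hQsymm hQAA hQσAσA ha ha, ← neg_neg (Q a (σ a)), hQ]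
  simp only [Complex.add_re, Complex.neg_re, Complex.ofReal_re]
  linarith

theorem apply_I_smul_add_conj (hconj : ∀ (c : ℂ) (w : W), σ (c • w) = starRingEnd ℂ c • σ w)
    (hQsymm : ∀ u v : W, Q u v = Q v u)
    (hQAA : ∀ u ∈ A, ∀ v ∈ A, Q u v = 0) (hQσAσA : ∀ a ∈ A, ∀ a' ∈ A, Q (σ a) (σ a') = 0)
    {a b : W} (ha : a ∈ A) (hb : b ∈ A) :
    Q (Complex.I • a + σ (Complex.I • a)) (Complex.I • b + σ (Complex.I • b)) =
      Q (a + σ a) (b + σ b) := by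
  rw [apply_add_conj_add_conj hQsymm hQAA hQσAσA (A.smul_mem _ ha) (A.smul_mem _ hb),
    apply_add_conj_add_conj hQsymm hQAA hQσAσA ha hb, hconj, hconj]
  simp only [map_smul, LinearMap.smul_apply, smul_eq_mul, Complex.conj_I]
  linear_combination (-Q a (σ b) - Q b (σ a)) * Complex.I_sq

theorem apply_add_conj_eq_zero_of_mem {C : Submodule ℂ W} (hQsymm : ∀ u v : W, Q u v = Q v u)
    (hQAC : ∀ u ∈ A, ∀ v ∈ C, Q u v = 0) (hQCσA : ∀ u ∈ C, ∀ a ∈ A, Q u (σ a) = 0)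
    {a y : W} (ha : a ∈ A) (hy : y ∈ C) : Q (a + σ a) y = 0 := by
  rw [map_add, LinearMap.add_apply, hQAC a ha y hy, hQsymm, hQCσA y hy a ha, add_zero]

end HodgeForm

theorem polarized_weight_two_gives_CR_hermitian_general
    {W : Type*} [AddCommGroup W] [Module ℂ W]
    (σ : W →ₗ[ℝ] W)
    (hconj : ∀ (c : ℂ) (w : W), σ (c • w) = (starRingEnd ℂ) c • σ w)
    (A C : Submodule ℂ W)
    (Q : W →ₗ[ℂ] W →ₗ[ℂ] ℂ)
    (hQconj : ∀ u v : W, Q (σ u) (σ v) = (starRingEnd ℂ) (Q u v))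
    (hQsymm : ∀ u v : W, Q u v = Q v u)
    (hQAA : ∀ u ∈ A, ∀ v ∈ A, Q u v = 0)
    (hQAC : ∀ u ∈ A, ∀ v ∈ C, Q u v = 0)
    (hQCσA : ∀ u ∈ C, ∀ a ∈ A, Q u (σ a) = 0)
    (hQσAσA : ∀ a ∈ A, ∀ a' ∈ A, Q (σ a) (σ a') = 0)
    (hQposA : ∀ u ∈ A, u ≠ 0 → ∃ r : ℝ, 0 < r ∧ -Q u (σ u) = (r : ℂ))
    (hQposC : ∀ w ∈ C, w ≠ 0 → ∃ r : ℝ, 0 < r ∧ Q w (σ w) = (r : ℂ))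
    (I : W →ₗ[ℝ] W)
    (hI : ∀ a ∈ A, I (a + σ a) = Complex.I • a + σ (Complex.I • a)) :
    (∀ x y : W, σ x = x → σ y = y → (Q x y).im = 0) ∧
    (∀ x ∈ {w : W | ∃ a ∈ A, w = a + σ a}, x ≠ 0 → (Q x x).re < 0) ∧
    (∀ x ∈ {w : W | ∃ a ∈ A, w = a + σ a}, ∀ y ∈ {w : W | ∃ a ∈ A, w = a + σ a},
      Q (I x) (I y) = Q x y) ∧
    (∀ x ∈ C, σ x = x → x ≠ 0 → 0 < (Q x x).re) ∧
    (∀ x ∈ {w : W | ∃ a ∈ A, w = a + σ a}, ∀ y ∈ C, σ y = y → Q x y = 0) := by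
  refine ⟨?_, ?_, ?_, ?_, ?_⟩
  · exact fun x y hx hy => im_apply_eq_zero_of_apply_conj hQconj hx hy
  · rintro x ⟨a, ha, rfl⟩ hx
    exact re_apply_add_conj_self_neg hQsymm hQAA hQσAσA hQposA ha hx
  · rintro x ⟨a, ha, rfl⟩ y ⟨b, hb, rfl⟩
    rw [hI a ha, hI b hb]
    exact apply_I_smul_add_conj hconj hQsymm hQAA hQσAσA ha hb
  · intro x hx hxσ hx0
    obtain ⟨r, hr, hQ⟩ := hQposC x hx hx0
    rw [hxσ] at hQ
    simpa [hQ] using hr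
  · rintro x ⟨a, ha, rfl⟩ y hy -
    exact apply_add_conj_eq_zero_of_mem hQsymm hQAC hQCσA ha hy

/-- **A polarization of a weight-2 Hodge structure yields a CR Hermitian structure.**
Let `W` be a finite-dimensional complex vector space with conjugation `σ` and real points
`V = {w | σ w = w}`, let `(A, C)` be a weight-2 Hodge decomposition, and let `Q` be a
symmetric `ℂ`-bilinear form satisfying the polarization conditions (i)–(iv).  Put
`H := {a + σ a | a ∈ A}` and `F := {w ∈ C | σ w = w}`, and let `I` restrict on `H` to the
operator `a + σ a ↦ i • a + σ (i • a)`.  Then `Q` is real on `V × V`; `Q|_H` is negative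
definite and `I`-invariant; `Q|_F` is positive definite; and `H ⟂ F` w.r.t. `Q`. -/
theorem polarized_weight_two_gives_CR_hermitian
    {W : Type*} [AddCommGroup W] [Module ℂ W] [FiniteDimensional ℂ W]
    (σ : W →ₗ[ℝ] W)
    (hinv : ∀ w : W, σ (σ w) = w)
    (hconj : ∀ (c : ℂ) (w : W), σ (c • w) = (starRingEnd ℂ) c • σ w)
    (A C : Submodule ℂ W) (hAC : IsHodge2 σ A C)
    (Q : W →ₗ[ℂ] W →ₗ[ℂ] ℂ)
    (hQconj : ∀ u v : W, Q (σ u) (σ v) = (starRingEnd ℂ) (Q u v))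
    (hQsymm : ∀ u v : W, Q u v = Q v u)
    (hQAA : ∀ u ∈ A, ∀ v ∈ A, Q u v = 0)
    (hQAC : ∀ u ∈ A, ∀ v ∈ C, Q u v = 0)
    (hQCσA : ∀ u ∈ C, ∀ a ∈ A, Q u (σ a) = 0)
    (hQσAσA : ∀ a ∈ A, ∀ a' ∈ A, Q (σ a) (σ a') = 0)
    (hQposA : ∀ u ∈ A, u ≠ 0 → ∃ r : ℝ, 0 < r ∧ -Q u (σ u) = (r : ℂ))
    (hQposC : ∀ w ∈ C, w ≠ 0 → ∃ r : ℝ, 0 < r ∧ Q w (σ w) = (r : ℂ))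
    (I : W →ₗ[ℝ] W)
    (hI : ∀ a ∈ A, I (a + σ a) = Complex.I • a + σ (Complex.I • a)) :
    (∀ x y : W, σ x = x → σ y = y → (Q x y).im = 0) ∧
    (∀ x ∈ {w : W | ∃ a ∈ A, w = a + σ a}, x ≠ 0 → (Q x x).re < 0) ∧
    (∀ x ∈ {w : W | ∃ a ∈ A, w = a + σ a}, ∀ y ∈ {w : W | ∃ a ∈ A, w = a + σ a},
      Q (I x) (I y) = Q x y) ∧
    (∀ x ∈ C, σ x = x → x ≠ 0 → 0 < (Q x x).re) ∧
    (∀ x ∈ {w : W | ∃ a ∈ A, w = a + σ a}, ∀ y ∈ C, σ y = y → Q x y = 0) :=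
  polarized_weight_two_gives_CR_hermitian_general σ hconj A C Q hQconj hQsymm hQAA hQAC hQCσA hQσAσA
    hQposA hQposC I hI
end

section
/- Let U be a finite-dimensional complex vector space, regarded also as a real vector space, and let V ⊆ U be an ℝ-subspace. Set H := {v ∈ V | i • v ∈ V} (the distinguished complex subspace), and let F ⊆ V be an ℝ-subspace such that V = H ⊕ F and U = V ⊕ (i • F) (internal direct sums of real subspaces, where i • F = {i • x | x ∈ F}). Let g : V → V → ℝ be a symmetric ℝ-bilinear form such that: g restricted to H is negative definite and satisfies g(i • x, i • y) = g(x, y) for x, y ∈ H; g restricted to F is positive definite; and g(x, y) = 0 for x ∈ H, y ∈ F. Then there exists a symmetric positive-definite ℝ-bilinear form h : U → U → ℝ with h(i • u, i • u') = h(u, u') for all u, u' ∈ U (i.e. h is the real part of a Hermitian inner product on U), such that h(x, y) = −g(x, y) for x, y ∈ H, h(x, y) = g(x, y) for x, y ∈ F, and h(x, y) = 0 for x ∈ H, y ∈ F. -/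
/-!
As a real vector space `U = H ⊕ F ⊕ i • F`, where `H` is the complex part of `V`; in these
coordinates multiplication by `i` acts as `(a, b, c) ↦ (i a, -c, b)`. Take `h := -g ⊕ g ⊕ g`
on the three summands. It is positive definite because each summand is, and `i`-invariant
because `g` is `i`-invariant on `H` while `i` merely swaps the two copies of `F` up to sign.
-/

namespace CRHermitian

open Complex (I)

section BilinProd

variable {R M₁ M₂ N : Type*} [CommSemiring R] [AddCommMonoid M₁] [AddCommMonoid M₂]
  [AddCommMonoid N] [Module R M₁] [Module R M₂] [Module R N]

def bilinProd (B₁ : LinearMap.BilinMap R M₁ N) (B₂ : LinearMap.BilinMap R M₂ N) :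
    LinearMap.BilinMap R (M₁ × M₂) N :=
  B₁.compl₁₂ (.fst R M₁ M₂) (.fst R M₁ M₂) + B₂.compl₁₂ (.snd R M₁ M₂) (.snd R M₁ M₂)

lemma toQuadraticMap_bilinProd (B₁ : LinearMap.BilinMap R M₁ N)
    (B₂ : LinearMap.BilinMap R M₂ N) :
    (bilinProd B₁ B₂).toQuadraticMap = B₁.toQuadraticMap.prod B₂.toQuadraticMap := by
  ext; rfl

end BilinProd

variable {U : Type*} [AddCommGroup U] [Module ℂ U]

section Decomposition

variable (V F : Submodule ℝ U)

def complexPart : Submodule ℝ U where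
  carrier := {v | v ∈ V ∧ I • v ∈ V}
  add_mem' ha hb := ⟨V.add_mem ha.1 hb.1, by rw [smul_add]; exact V.add_mem ha.2 hb.2⟩
  zero_mem' := ⟨V.zero_mem, by rw [smul_zero]; exact V.zero_mem⟩
  smul_mem' c _ hv := ⟨V.smul_mem c hv.1, by rw [smul_comm]; exact V.smul_mem c hv.2⟩

lemma complexPart_le : complexPart V ≤ V := fun _ hv => hv.1

variable {V} in
lemma I_smul_mem_complexPart {v : U} (hv : v ∈ complexPart V) : I • v ∈ complexPart V :=
  ⟨hv.2, by rw [smul_smul, Complex.I_mul_I, neg_one_smul]; exact V.neg_mem hv.1⟩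

def assemble : complexPart V × F × F →ₗ[ℝ] U :=
  (complexPart V).subtype.coprod (F.subtype.coprod ((I • LinearMap.id).comp F.subtype))

lemma assemble_apply (p : complexPart V × F × F) :
    assemble V F p = p.1 + p.2.1 + I • (p.2.2 : U) := by
  simp [assemble, add_assoc]

variable {V F}

def rotate (p : complexPart V × F × F) : complexPart V × F × F :=
  (⟨I • (p.1 : U), I_smul_mem_complexPart p.1.2⟩, -p.2.2, p.2.1)

lemma assemble_rotate (p : complexPart V × F × F) :
    assemble V F (rotate p) = I • assemble V F p := by
  simp only [assemble_apply, rotate, smul_add, smul_smul, Complex.I_mul_I, neg_one_smul,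
    Submodule.coe_neg]
  abel

lemma assemble_injective (hFV : F ≤ V)
    (hVHF : ∀ v ∈ V, ∃! p : U × U,
      p.1 ∈ {v : U | v ∈ V ∧ I • v ∈ V} ∧ p.2 ∈ F ∧ v = p.1 + p.2)
    (hUViF : ∀ u : U, ∃! p : U × U, p.1 ∈ V ∧ p.2 ∈ F ∧ u = p.1 + I • p.2) :
    Function.Injective (assemble V F) := by
  intro p q hpq
  rw [assemble_apply, assemble_apply] at hpq
  have hpV : (p.1 : U) + p.2.1 ∈ V := V.add_mem (complexPart_le V p.1.2) (hFV p.2.1.2)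
  have hqV : (q.1 : U) + q.2.1 ∈ V := V.add_mem (complexPart_le V q.1.2) (hFV q.2.1.2)
  have hU := (hUViF _).unique (y₁ := ((p.1 : U) + p.2.1, (p.2.2 : U)))
    (y₂ := ((q.1 : U) + q.2.1, (q.2.2 : U))) ⟨hpV, p.2.2.2, rfl⟩ ⟨hqV, q.2.2.2, hpq⟩
  simp only [Prod.mk.injEq] at hU
  have hV := (hVHF _ hpV).unique (y₁ := ((p.1 : U), (p.2.1 : U)))
    (y₂ := ((q.1 : U), (q.2.1 : U))) ⟨p.1.2, p.2.1.2, rfl⟩ ⟨q.1.2, q.2.1.2, hU.1⟩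
  simp only [Prod.mk.injEq] at hV
  exact Prod.ext (Subtype.ext hV.1) (Prod.ext (Subtype.ext hV.2) (Subtype.ext hU.2))

lemma assemble_surjective
    (hVHF : ∀ v ∈ V, ∃! p : U × U,
      p.1 ∈ {v : U | v ∈ V ∧ I • v ∈ V} ∧ p.2 ∈ F ∧ v = p.1 + p.2)
    (hUViF : ∀ u : U, ∃! p : U × U, p.1 ∈ V ∧ p.2 ∈ F ∧ u = p.1 + I • p.2) :
    Function.Surjective (assemble V F) := by
  intro u
  obtain ⟨⟨v, c⟩, ⟨hv, hc, rfl⟩, -⟩ := hUViF u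
  obtain ⟨⟨a, b⟩, ⟨ha, hb, rfl⟩, -⟩ := hVHF v hv
  exact ⟨(⟨a, ha⟩, ⟨b, hb⟩, ⟨c, hc⟩), assemble_apply V F _⟩

end Decomposition

section ModelForm

variable {V F : Submodule ℝ U} (hFV : F ≤ V) (g : V →ₗ[ℝ] V →ₗ[ℝ] ℝ)

local notation "ιH" => Submodule.inclusion (complexPart_le V)
local notation "ιF" => Submodule.inclusion hFV

def modelForm : LinearMap.BilinMap ℝ (complexPart V × F × F) ℝ :=
  bilinProd (-g.compl₁₂ ιH ιH) (bilinProd (g.compl₁₂ ιF ιF) (g.compl₁₂ ιF ιF))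

@[simp]
lemma modelForm_apply (x y : complexPart V × F × F) :
    modelForm hFV g x y =
      -g (ιH x.1) (ιH y.1) + (g (ιF x.2.1) (ιF y.2.1) + g (ιF x.2.2) (ιF y.2.2)) := rfl

lemma modelForm_comm (hgsymm : ∀ x y : V, g x y = g y x) (x y : complexPart V × F × F) :
    modelForm hFV g x y = modelForm hFV g y x := by
  simp only [modelForm_apply, hgsymm (ιH x.1), hgsymm (ιF x.2.1), hgsymm (ιF x.2.2)]

lemma modelForm_rotate
    (hgHinv : ∀ x y x' y' : V,
      (x : U) ∈ complexPart V → (y : U) ∈ complexPart V →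
      (x' : U) = I • (x : U) → (y' : U) = I • (y : U) → g x' y' = g x y)
    (x y : complexPart V × F × F) :
    modelForm hFV g (rotate x) (rotate y) = modelForm hFV g x y := by
  have hH : g (ιH (rotate x).1) (ιH (rotate y).1) = g (ιH x.1) (ιH y.1) :=
    hgHinv _ _ _ _ x.1.2 y.1.2 rfl rfl
  rw [modelForm_apply, modelForm_apply, hH]
  simp only [rotate, map_neg, LinearMap.neg_apply, neg_neg]
  ring

lemma modelForm_posDef
    (hgHneg : ∀ x : V, (x : U) ∈ complexPart V → x ≠ 0 → g x x < 0)
    (hgFpos : ∀ x : V, (x : U) ∈ F → x ≠ 0 → 0 < g x x) :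
    (modelForm hFV g).toQuadraticMap.PosDef := by
  have hH : QuadraticMap.PosDef (LinearMap.BilinMap.toQuadraticMap (-g.compl₁₂ ιH ιH)) :=
    fun z hz => neg_pos.mpr <| hgHneg _ z.2 <|
      (map_ne_zero_iff _ (Submodule.inclusion_injective (complexPart_le V))).mpr hz
  have hF : QuadraticMap.PosDef (LinearMap.BilinMap.toQuadraticMap (g.compl₁₂ ιF ιF)) :=
    fun z hz => hgFpos _ z.2 ((map_ne_zero_iff _ (Submodule.inclusion_injective hFV)).mpr hz)
  rw [modelForm, toQuadraticMap_bilinProd, toQuadraticMap_bilinProd]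
  exact hH.prod (hF.prod hF)

end ModelForm

section Extension

variable {V F : Submodule ℝ U} (hFV : F ≤ V)
  (hVHF : ∀ v ∈ V, ∃! p : U × U,
    p.1 ∈ {v : U | v ∈ V ∧ I • v ∈ V} ∧ p.2 ∈ F ∧ v = p.1 + p.2)
  (hUViF : ∀ u : U, ∃! p : U × U, p.1 ∈ V ∧ p.2 ∈ F ∧ u = p.1 + I • p.2)

noncomputable def decompose : U ≃ₗ[ℝ] complexPart V × F × F :=
  (LinearEquiv.ofBijective (assemble V F)
    ⟨assemble_injective hFV hVHF hUViF, assemble_surjective hVHF hUViF⟩).symm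

lemma decompose_eq_iff {u : U} {p : complexPart V × F × F} :
    decompose hFV hVHF hUViF u = p ↔ assemble V F p = u :=
  (LinearEquiv.symm_apply_eq _).trans eq_comm

lemma assemble_decompose (u : U) : assemble V F (decompose hFV hVHF hUViF u) = u :=
  (decompose_eq_iff hFV hVHF hUViF).mp rfl

lemma decompose_I_smul (u : U) :
    decompose hFV hVHF hUViF (I • u) = rotate (decompose hFV hVHF hUViF u) := by
  rw [decompose_eq_iff, assemble_rotate, assemble_decompose]

lemma decompose_of_mem_complexPart {x : U} (hx : x ∈ complexPart V) :
    decompose hFV hVHF hUViF x = (⟨x, hx⟩, 0, 0) := by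
  simp [decompose_eq_iff, assemble_apply]

lemma decompose_of_mem {x : U} (hx : x ∈ F) :
    decompose hFV hVHF hUViF x = (0, ⟨x, hx⟩, 0) := by
  simp [decompose_eq_iff, assemble_apply]

noncomputable def hermitianExtension (g : V →ₗ[ℝ] V →ₗ[ℝ] ℝ) : U →ₗ[ℝ] U →ₗ[ℝ] ℝ :=
  (modelForm hFV g).compl₁₂ (decompose hFV hVHF hUViF).toLinearMap
    (decompose hFV hVHF hUViF).toLinearMap

lemma hermitianExtension_apply (g : V →ₗ[ℝ] V →ₗ[ℝ] ℝ) (u u' : U) :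
    hermitianExtension hFV hVHF hUViF g u u' =
      modelForm hFV g (decompose hFV hVHF hUViF u) (decompose hFV hVHF hUViF u') := rfl

end Extension

end CRHermitian

open CRHermitian

theorem CR_hermitian_extends_to_hermitian_general
    {U : Type*} [AddCommGroup U] [Module ℂ U]
    (V F : Submodule ℝ U) (hFV : F ≤ V)
    (hVHF : ∀ v ∈ V, ∃! p : U × U,
      p.1 ∈ {v : U | v ∈ V ∧ Complex.I • v ∈ V} ∧ p.2 ∈ F ∧ v = p.1 + p.2)
    (hUViF : ∀ u : U, ∃! p : U × U,
      p.1 ∈ V ∧ p.2 ∈ F ∧ u = p.1 + Complex.I • p.2)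
    (g : V →ₗ[ℝ] V →ₗ[ℝ] ℝ)
    (hgsymm : ∀ x y : V, g x y = g y x)
    (hgHneg : ∀ x : V, (x : U) ∈ {v : U | v ∈ V ∧ Complex.I • v ∈ V} → x ≠ 0 → g x x < 0)
    (hgHinv : ∀ x y x' y' : V,
      (x : U) ∈ {v : U | v ∈ V ∧ Complex.I • v ∈ V} →
      (y : U) ∈ {v : U | v ∈ V ∧ Complex.I • v ∈ V} →
      (x' : U) = Complex.I • (x : U) → (y' : U) = Complex.I • (y : U) →
      g x' y' = g x y)
    (hgFpos : ∀ x : V, (x : U) ∈ F → x ≠ 0 → 0 < g x x) :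
    ∃ h : U →ₗ[ℝ] U →ₗ[ℝ] ℝ,
      (∀ u u' : U, h u u' = h u' u) ∧
      (∀ u : U, u ≠ 0 → 0 < h u u) ∧
      (∀ u u' : U, h (Complex.I • u) (Complex.I • u') = h u u') ∧
      (∀ x y : V, (x : U) ∈ {v : U | v ∈ V ∧ Complex.I • v ∈ V} →
        (y : U) ∈ {v : U | v ∈ V ∧ Complex.I • v ∈ V} → h x y = -(g x y)) ∧
      (∀ x y : V, (x : U) ∈ F → (y : U) ∈ F → h x y = g x y) ∧
      (∀ x y : V, (x : U) ∈ {v : U | v ∈ V ∧ Complex.I • v ∈ V} →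
        (y : U) ∈ F → h x y = 0) := by
  refine ⟨hermitianExtension hFV hVHF hUViF g, fun u u' => modelForm_comm hFV g hgsymm _ _,
    fun u hu =>
      modelForm_posDef hFV g hgHneg hgFpos _ ((decompose hFV hVHF hUViF).map_ne_zero_iff.mpr hu),
    fun u u' => ?_, fun x y hx hy => ?_, fun x y hx hy => ?_, fun x y hx hy => ?_⟩
  · simp only [hermitianExtension_apply, decompose_I_smul, modelForm_rotate hFV g hgHinv]
  · simp [hermitianExtension_apply, decompose_of_mem_complexPart hFV hVHF hUViF hx,
      decompose_of_mem_complexPart hFV hVHF hUViF hy]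
    rfl
  · simp [hermitianExtension_apply, decompose_of_mem hFV hVHF hUViF hx,
      decompose_of_mem hFV hVHF hUViF hy]
    rfl
  · simp [hermitianExtension_apply, decompose_of_mem_complexPart hFV hVHF hUViF hx,
      decompose_of_mem hFV hVHF hUViF hy]

/-- **Every CR Hermitian structure on a real subspace is induced by a Hermitian structure.**
Let `U` be a finite-dimensional complex vector space and `V ⊆ U` an `ℝ`-subspace, with
distinguished complex subspace `H = {v ∈ V | i • v ∈ V}` and an `ℝ`-subspace `F ⊆ V` such
that `V = H ⊕ F` and `U = V ⊕ (i • F)`.  Let `g` be a symmetric `ℝ`-bilinear form on `V`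
which is negative definite and `i`-invariant on `H`, positive definite on `F`, and for
which `H ⟂ F`.  Then there is a symmetric positive-definite `ℝ`-bilinear form `h` on `U`
invariant under multiplication by `i` (the real part of a Hermitian inner product) with
`h = -g` on `H × H`, `h = g` on `F × F`, and `h = 0` on `H × F`. -/
theorem CR_hermitian_extends_to_hermitian
    {U : Type*} [AddCommGroup U] [Module ℂ U] [FiniteDimensional ℂ U]
    (V F : Submodule ℝ U) (hFV : F ≤ V)
    (hVHF : ∀ v ∈ V, ∃! p : U × U,
      p.1 ∈ {v : U | v ∈ V ∧ Complex.I • v ∈ V} ∧ p.2 ∈ F ∧ v = p.1 + p.2)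
    (hUViF : ∀ u : U, ∃! p : U × U,
      p.1 ∈ V ∧ p.2 ∈ F ∧ u = p.1 + Complex.I • p.2)
    (g : V →ₗ[ℝ] V →ₗ[ℝ] ℝ)
    (hgsymm : ∀ x y : V, g x y = g y x)
    (hgHneg : ∀ x : V, (x : U) ∈ {v : U | v ∈ V ∧ Complex.I • v ∈ V} → x ≠ 0 → g x x < 0)
    (hgHinv : ∀ x y x' y' : V,
      (x : U) ∈ {v : U | v ∈ V ∧ Complex.I • v ∈ V} →
      (y : U) ∈ {v : U | v ∈ V ∧ Complex.I • v ∈ V} →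
      (x' : U) = Complex.I • (x : U) → (y' : U) = Complex.I • (y : U) →
      g x' y' = g x y)
    (hgFpos : ∀ x : V, (x : U) ∈ F → x ≠ 0 → 0 < g x x)
    (hgHF : ∀ x y : V, (x : U) ∈ {v : U | v ∈ V ∧ Complex.I • v ∈ V} →
      (y : U) ∈ F → g x y = 0) :
    ∃ h : U →ₗ[ℝ] U →ₗ[ℝ] ℝ,
      (∀ u u' : U, h u u' = h u' u) ∧
      (∀ u : U, u ≠ 0 → 0 < h u u) ∧
      (∀ u u' : U, h (Complex.I • u) (Complex.I • u') = h u u') ∧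
      (∀ x y : V, (x : U) ∈ {v : U | v ∈ V ∧ Complex.I • v ∈ V} →
        (y : U) ∈ {v : U | v ∈ V ∧ Complex.I • v ∈ V} → h x y = -(g x y)) ∧
      (∀ x y : V, (x : U) ∈ F → (y : U) ∈ F → h x y = g x y) ∧
      (∀ x y : V, (x : U) ∈ {v : U | v ∈ V ∧ Complex.I • v ∈ V} →
        (y : U) ∈ F → h x y = 0) :=
  CR_hermitian_extends_to_hermitian_general V F hFV hVHF hUViF g hgsymm hgHneg hgHinv hgFpos
end

section
/- Let W be a finite-dimensional complex vector space with conjugation σ, let n be a natural number, and let W_0, …, W_n be complex subspaces with W = W_0 ⊕ W_1 ⊕ ⋯ ⊕ W_n (internal direct sum) and σ(W_p) = W_{n−p} for all p. Let Q : W → W → ℂ be a ℂ-bilinear form such that: (i) Q(σ u, σ v) = conj(Q(u, v)); (ii) Q(v, u) = (−1)^n Q(u, v); (iii) Q(u, v) = 0 whenever u ∈ W_p, v ∈ W_r and r ≠ n − p; (iv) for every p and every nonzero u ∈ W_p, the number i^(2p−n) · Q(u, σ u) is a positive real (with i^(2p−n) interpreted as an integer power of i). Let S ⊆ W be a complex subspace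 with σ(S) = S and S = (S ∩ W_0) ⊕ ⋯ ⊕ (S ∩ W_n) (i.e. S is a sub-Hodge structure), and let S^⊥ := {w ∈ W | Q(s, w) = 0 for all s ∈ S}. Then W = S ⊕ S^⊥ (internal direct sum), σ(S^⊥) = S^⊥, and S^⊥ = (S^⊥ ∩ W_0) ⊕ ⋯ ⊕ (S^⊥ ∩ W_n); in particular every sub-Hodge structure of a polarized Hodge structure admits a complementary sub-Hodge structure. -/
/-- **Orthogonal complements of sub-Hodge structures of polarized Hodge structures.**
Let `W` be a finite-dimensional complex vector space with conjugation `σ`, decomposed as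
`W = W₀ ⊕ ⋯ ⊕ Wₙ` with `σ(Wₚ) = W₍ₙ₋ₚ₎`, and let `Q` be a polarization: a `ℂ`-bilinear
form with `Q (σ u) (σ v) = conj (Q u v)`, `(-1)ⁿ`-symmetric, with `Q u v = 0` for
`u ∈ Wₚ`, `v ∈ Wᵣ`, `r ≠ n - p`, and `i^(2p - n) Q u (σ u)` a positive real for
`0 ≠ u ∈ Wₚ`.  Let `S` be a `σ`-stable graded complex subspace (`S = ⊕ₚ (S ∩ Wₚ)`), and
let `S^⊥ = {w | Q s w = 0 ∀ s ∈ S}`.  Then `W = S ⊕ S^⊥`, `σ(S^⊥) = S^⊥`, and `S^⊥` is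
again graded: every sub-Hodge structure admits a complementary sub-Hodge structure. -/
theorem polarized_hodge_orthogonal_complement
    {W : Type*} [AddCommGroup W] [Module ℂ W] [FiniteDimensional ℂ W]
    (σ : W →ₗ[ℝ] W)
    (hinv : ∀ w : W, σ (σ w) = w)
    (hconj : ∀ (c : ℂ) (w : W), σ (c • w) = (starRingEnd ℂ) c • σ w)
    (n : ℕ) (Wp : Fin (n + 1) → Submodule ℂ W)
    (hdirect : DirectSum.IsInternal Wp)
    (hσWp : ∀ p : Fin (n + 1), σ '' (Wp p : Set W) = (Wp p.rev : Set W))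
    (Q : W →ₗ[ℂ] W →ₗ[ℂ] ℂ)
    (hQconj : ∀ u v : W, Q (σ u) (σ v) = (starRingEnd ℂ) (Q u v))
    (hQsymm : ∀ u v : W, Q v u = (-1 : ℂ) ^ n * Q u v)
    (hQvanish : ∀ p r : Fin (n + 1), r ≠ p.rev →
      ∀ u ∈ Wp p, ∀ v ∈ Wp r, Q u v = 0)
    (hQpos : ∀ p : Fin (n + 1), ∀ u ∈ Wp p, u ≠ 0 →
      ∃ t : ℝ, 0 < t ∧ Complex.I ^ (2 * (p : ℤ) - n) * Q u (σ u) = (t : ℂ))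
    (S : Submodule ℂ W)
    (hSσ : σ '' (S : Set W) = (S : Set W))
    (hSgraded : S = ⨆ p : Fin (n + 1), S ⊓ Wp p) :
    (∀ w : W, ∃! q : W × W,
        q.1 ∈ S ∧ q.2 ∈ {w : W | ∀ s ∈ S, Q s w = 0} ∧ w = q.1 + q.2) ∧
    (σ '' {w : W | ∀ s ∈ S, Q s w = 0} = {w : W | ∀ s ∈ S, Q s w = 0}) ∧
    (∀ w ∈ {w : W | ∀ s ∈ S, Q s w = 0},
      ∃ f : Fin (n + 1) → W,
        (∀ p, f p ∈ {w : W | ∀ s ∈ S, Q s w = 0} ∧ f p ∈ Wp p) ∧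
        w = ∑ p, f p) := by
  classical
  have hrefl : Q.IsRefl := fun u v h => by rw [hQsymm, h, mul_zero]
  set T : Submodule ℂ W := LinearMap.BilinForm.orthogonal Q S with hTdef
  have hmemT : ∀ w : W, w ∈ T ↔ ∀ s ∈ S, Q s w = 0 := by
    intro w
    rw [hTdef, LinearMap.BilinForm.mem_orthogonal_iff]
  have hσS : ∀ u ∈ S, σ u ∈ S := by
    intro u hu
    have : σ u ∈ σ '' (S : Set W) := Set.mem_image_of_mem σ hu
    rwa [hSσ] at this
  have hσWmem : ∀ p : Fin (n + 1), ∀ u ∈ Wp p, σ u ∈ Wp p.rev := by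
    intro p u hu
    have : σ u ∈ σ '' (Wp p : Set W) := Set.mem_image_of_mem σ hu
    rwa [hσWp p] at this
  -- decomposition of elements of `S`
  have hdecS : ∀ s ∈ S, ∃ a : Fin (n + 1) → W,
      (∀ p, a p ∈ S ∧ a p ∈ Wp p) ∧ s = ∑ p, a p := by
    intro s hs
    rw [hSgraded, Submodule.mem_iSup_iff_exists_finsupp] at hs
    obtain ⟨f, hf, hsum⟩ := hs
    refine ⟨fun p => f p, fun p => ⟨(hf p).1, (hf p).2⟩, ?_⟩
    rw [← hsum, Finsupp.sum_fintype]
    intro i; rfl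
  -- nonvanishing from positivity
  have hQne : ∀ p : Fin (n + 1), ∀ u ∈ Wp p, u ≠ 0 → Q (σ u) u ≠ 0 := by
    intro p u hu hne
    obtain ⟨t, ht, heq⟩ := hQpos p u hu hne
    have hQu : Q u (σ u) ≠ 0 := by
      intro h0
      rw [h0, mul_zero] at heq
      exact ht.ne' (by exact_mod_cast heq.symm)
    rw [hQsymm u (σ u)]
    exact mul_ne_zero (pow_ne_zero _ (by norm_num)) hQu
  -- nondegeneracy of the restriction of `Q` to `S`
  have hnd : (LinearMap.BilinForm.restrict Q S).Nondegenerate := by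
    refine LinearMap.BilinForm.Nondegenerate.ofSeparatingLeft ?_
    rintro ⟨s, hs⟩ h
    have h' : ∀ y ∈ S, Q s y = 0 := fun y hy => h ⟨y, hy⟩
    obtain ⟨a, ha, hsum⟩ := hdecS s hs
    have hazero : ∀ p, a p = 0 := by
      intro p
      by_contra hne
      have hQs : Q (σ (a p)) s = 0 :=
        hrefl _ _ (h' (σ (a p)) (hσS _ (ha p).1))
      have hsumQ : Q (σ (a p)) s = Q (σ (a p)) (a p) := by
        rw [hsum, map_sum]
        refine Finset.sum_eq_single_of_mem p (Finset.mem_univ p) ?_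
        intro r _ hr
        refine hQvanish p.rev r ?_ _ (hσWmem p _ (ha p).2) _ (ha r).2
        rwa [Fin.rev_rev]
      exact hQne p (a p) (ha p).2 hne (hsumQ ▸ hQs)
    have : s = 0 := by
      rw [hsum]
      exact Finset.sum_eq_zero fun p _ => hazero p
    exact Subtype.ext this
  have hcompl : IsCompl S T := by
    rw [hTdef]
    exact (LinearMap.BilinForm.restrict_nondegenerate_iff_isCompl_orthogonal hrefl).mp hnd
  -- σ-stability of the orthogonal set
  have hσT : ∀ w ∈ {w : W | ∀ s ∈ S, Q s w = 0}, σ w ∈ {w : W | ∀ s ∈ S, Q s w = 0} := by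
    intro w hw s hs
    have : Q s (σ w) = Q (σ (σ s)) (σ w) := by rw [hinv]
    rw [this, hQconj, hw (σ s) (hσS s hs), map_zero]
  refine ⟨?_, ?_, ?_⟩
  · -- unique decomposition
    intro w
    obtain ⟨s, t, hs, ht, hw⟩ := Submodule.codisjoint_iff_exists_add_eq.mp hcompl.codisjoint w
    refine ⟨(s, t), ⟨hs, (hmemT t).mp ht, hw.symm⟩, ?_⟩
    rintro ⟨s', t'⟩ ⟨hs', ht', hw'⟩
    have ht'T : t' ∈ T := (hmemT t').mpr ht'
    have hadd : s + t = s' + t' := hw.trans hw'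
    have hdiff : s' - s = t - t' := by
      rw [sub_eq_sub_iff_add_eq_add, ← hadd]
      abel
    have h0 : s' - s = 0 := by
      have h1 : s' - s ∈ S := sub_mem hs' hs
      have h2 : s' - s ∈ T := hdiff ▸ sub_mem ht ht'T
      exact (Submodule.disjoint_def.mp hcompl.disjoint) _ h1 h2
    have hs'' : s' = s := by rwa [sub_eq_zero] at h0
    have ht'' : t' = t := by
      have h3 : s + t = s + t' := by rw [hadd, hs'']
      exact (add_left_cancel h3).symm
    simp [hs'', ht'']
  · -- σ-stability
    ext w
    constructor
    · rintro ⟨v, hv, rfl⟩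
      exact hσT v hv
    · intro hw
      exact ⟨σ w, hσT w hw, hinv w⟩
  · -- gradedness of the orthogonal complement
    intro w hw
    have hwtop : w ∈ ⨆ p, Wp p := by
      rw [hdirect.submodule_iSup_eq_top]; trivial
    rw [Submodule.mem_iSup_iff_exists_finsupp] at hwtop
    obtain ⟨f, hf, hsum⟩ := hwtop
    have hsum' : w = ∑ p, f p := by
      rw [← hsum, Finsupp.sum_fintype]
      intro i; rfl
    have key : ∀ r : Fin (n + 1), ∀ u, u ∈ S ∧ u ∈ Wp r → ∀ p, Q u (f p) = 0 := by
      intro r u ⟨huS, huW⟩ p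
      by_cases hp : p = r.rev
      · subst hp
        have h1 : Q u w = 0 := hw u huS
        have h2 : Q u w = Q u (f r.rev) := by
          rw [hsum', map_sum]
          refine Finset.sum_eq_single_of_mem r.rev (Finset.mem_univ _) ?_
          intro b _ hb
          exact hQvanish r b hb u huW (f b) (hf b)
        rw [← h2]; exact h1
      · exact hQvanish r p hp u huW (f p) (hf p)
    refine ⟨fun p => f p, fun p => ⟨?_, hf p⟩, hsum'⟩
    intro s hs
    obtain ⟨a, ha, hsa⟩ := hdecS s hs
    rw [hsa, map_sum, LinearMap.sum_apply]
    exact Finset.sum_eq_zero fun r _ => key r (a r) (ha r) p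
end
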